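/- arXiv:2408.02902 — 2 statements merged into one kernel-verified Lean document; each statement's English description precedes it below -/
import Mathlib

section
/- Assume μ₀ := inf_{x∈V} μ(x) > 0, {x ∈ V : h(x) ≤ M} is finite for every M > 0, and f satisfies (F1), (F2), (F3), (F4). Then J_+ satisfies the Palais–Smale condition at every level c ∈ ℝ: if u_n ∈ H_s satisfies J_+(u_n) → c and sup{ |⟨J_+'(u_n), φ⟩| : φ ∈ H_s, ‖φ‖_{H_s} ≤ 1 } → 0, then some subsequence of u_n converges in the norm ‖·‖_{H_s} to a function u₀ ∈ H_s. -/
open Filter Topology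

/-- The fractional gradient pairing
`∇^s u ∇^s v(x) = (1/(2μ(x))) Σ_{y} W(x,y)(u(x) − u(y))(v(x) − v(y))`
(the diagonal term vanishes since `W(x,x) = 0`). -/
noncomputable def gradPair {V : Type*} (μ : V → ℝ) (W : V → V → ℝ) (u v : V → ℝ) (x : V) : ℝ :=
  (1 / (2 * μ x)) * ∑' y, W x y * (u x - u y) * (v x - v y)

/-- The norm `‖u‖_{H_s} = (∫_V (|∇^s u|² + h u²) dμ)^{1/2}`. -/
noncomputable def normHs {V : Type*} (μ : V → ℝ) (W : V → V → ℝ) (h : V → ℝ) (u : V → ℝ) : ℝ :=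
  Real.sqrt (∑' x, (gradPair μ W u u x + h x * (u x) ^ 2) * μ x)

/-- Membership in `H_s`: the norm `‖u‖_{H_s}` is finite and `u` is the `‖·‖_{H_s}`-limit of
finitely supported functions. -/
def memHs {V : Type*} (μ : V → ℝ) (W : V → V → ℝ) (h : V → ℝ) (u : V → ℝ) : Prop :=
  (Summable fun x => (gradPair μ W u u x + h x * (u x) ^ 2) * μ x) ∧
  ∃ uk : ℕ → V → ℝ, (∀ k, (Function.support (uk k)).Finite) ∧
    Tendsto (fun k => normHs μ W h (fun x => uk k x - u x)) atTop (𝓝 0)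

/-- The primitive `F(x,y) = ∫_0^y f(x,t) dt`. -/
noncomputable def Fprim {V : Type*} (f : V → ℝ → ℝ) (x : V) (y : ℝ) : ℝ :=
  ∫ t in (0:ℝ)..y, f x t

/-- The functional `J_+(u) = (1/2)‖u‖²_{H_s} − ∫_V F(x, u⁺) dμ`. -/
noncomputable def Jp {V : Type*} (μ : V → ℝ) (W : V → V → ℝ) (h : V → ℝ) (f : V → ℝ → ℝ)
    (u : V → ℝ) : ℝ :=
  (1 / 2) * (∑' x, (gradPair μ W u u x + h x * (u x) ^ 2) * μ x)
    - ∑' x, Fprim f x (max (u x) 0) * μ x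

/-- `λ₁ = inf{ ‖u‖²_{H_s}/‖u‖²_2 : u ∈ H_s, u ≢ 0 }`. -/
noncomputable def lam1 {V : Type*} (μ : V → ℝ) (W : V → V → ℝ) (h : V → ℝ) : ℝ :=
  sInf {r : ℝ | ∃ u : V → ℝ, memHs μ W h u ∧ u ≠ 0 ∧
    r = (normHs μ W h u) ^ 2 / (∑' x, (u x) ^ 2 * μ x)}

/-- The Fréchet derivative pairing
`⟨J_+'(u), φ⟩ = ∫_V (∇^s u ∇^s φ + h u φ) dμ − ∫_V f(x,u⁺) φ dμ`. -/
noncomputable def JpDeriv {V : Type*} (μ : V → ℝ) (W : V → V → ℝ) (h : V → ℝ)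
    (f : V → ℝ → ℝ) (u φ : V → ℝ) : ℝ :=
  (∑' x, (gradPair μ W u φ x + h x * u x * φ x) * μ x)
    - ∑' x, f x (max (u x) 0) * φ x * μ x
section Infra

open Filter Topology

lemma young_abs_mul {a b t : ℝ} (ht : 0 < t) : |a * b| ≤ t/2 * a^2 + 1/(2*t) * b^2 := by
  rw [abs_mul, show t/2*a^2 + 1/(2*t)*b^2 = (t^2*a^2+b^2)/(2*t) by field_simp,
    le_div_iff₀ (by positivity)]
  nlinarith [sq_nonneg (t*|a| - |b|), sq_abs a, sq_abs b, abs_nonneg a, abs_nonneg b]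

lemma bdd_of_tendsto {f : ℕ → ℝ} {l : ℝ} (h : Tendsto f atTop (𝓝 l)) : ∃ C, ∀ n, |f n| ≤ C := by
  obtain ⟨N, hN⟩ := (Metric.tendsto_atTop.1 h) 1 one_pos
  refine ⟨(|l| + 1) + ∑ i ∈ Finset.range N, |f i|, fun n => ?_⟩
  rcases lt_or_ge n N with hn | hn
  · have h1 : |f n| ≤ ∑ i ∈ Finset.range N, |f i| :=
      Finset.single_le_sum (f := fun i => |f i|) (fun i _ => abs_nonneg _) (Finset.mem_range.2 hn)
    have : (0:ℝ) ≤ |l| + 1 := by positivity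
    linarith
  · have h3 := hN n hn
    rw [Real.dist_eq] at h3
    have h2 : (0:ℝ) ≤ ∑ i ∈ Finset.range N, |f i| := Finset.sum_nonneg fun i _ => abs_nonneg _
    have := abs_sub_abs_le_abs_sub (f n) l
    linarith

lemma bdd_of_finite_support {V : Type*} {a : V → ℝ} (h : (Function.support a).Finite) :
    ∃ M, ∀ x, |a x| ≤ M := by
  have hfin : ((fun x => |a x|) '' (Function.support a)).Finite := h.image _
  obtain ⟨M, hM⟩ := hfin.bddAbove
  refine ⟨max M 0, fun x => ?_⟩
  by_cases hx : a x = 0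
  · simp [hx]
  · exact le_trans (hM (Set.mem_image_of_mem _ hx)) (le_max_left _ _)

structure PSD (V : Type*) where
  mu : V → ℝ
  W : V → V → ℝ
  h : V → ℝ
  hmu : ∀ x, 0 < mu x
  symm : ∀ x y, W x y = W y x
  Wnn : ∀ x y, 0 ≤ W x y
  wsum : ∀ x, Summable fun y => W x y
  mu0 : ℝ
  h0 : ℝ
  hmu0 : 0 < mu0
  hh0 : 0 < h0
  mu0le : ∀ x, mu0 ≤ mu x
  h0le : ∀ x, h0 ≤ h x

namespace PSD

variable {V : Type*} (D : PSD V)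

/-- The summand of the gradient pairing. -/
def row (u v : V → ℝ) (x y : V) : ℝ := D.W x y * (u x - u y) * (v x - v y)

/-- Term of the squared `H_s` norm. -/
noncomputable def Et (u : V → ℝ) (x : V) : ℝ :=
  (gradPair D.mu D.W u u x + D.h x * u x ^ 2) * D.mu x

/-- Squared `H_s` norm. -/
noncomputable def E (u : V → ℝ) : ℝ := ∑' x, D.Et u x

/-- Term of the bilinear form. -/
noncomputable def Bt (u v : V → ℝ) (x : V) : ℝ :=
  (gradPair D.mu D.W u v x + D.h x * u x * v x) * D.mu x

lemma gradPair_eq (u v : V → ℝ) (x : V) :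
    gradPair D.mu D.W u v x = (1/(2*D.mu x)) * ∑' y, D.row u v x y := rfl

lemma hpos (x : V) : 0 < D.h x := lt_of_lt_of_le D.hh0 (D.h0le x)

lemma row_nonneg (u : V → ℝ) (x y : V) : 0 ≤ D.row u u x y := by
  unfold row
  rw [mul_assoc]
  exact mul_nonneg (D.Wnn x y) (mul_self_nonneg _)

lemma row_abs_le {u v : V → ℝ} {M N : ℝ} (hu : ∀ x, |u x| ≤ M) (hv : ∀ x, |v x| ≤ N)
    (x y : V) : |D.row u v x y| ≤ D.W x y * (4 * M * N) := by
  unfold row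
  rw [abs_mul, abs_mul, abs_of_nonneg (D.Wnn x y)]
  have h1 : |u x - u y| ≤ 2 * M := by
    calc |u x - u y| ≤ |u x| + |u y| := abs_sub _ _
      _ ≤ 2 * M := by linarith [hu x, hu y]
  have h2 : |v x - v y| ≤ 2 * N := by
    calc |v x - v y| ≤ |v x| + |v y| := abs_sub _ _
      _ ≤ 2 * N := by linarith [hv x, hv y]
  have hM : 0 ≤ 2 * M := le_trans (abs_nonneg _) h1
  have hN : 0 ≤ 2 * N := le_trans (abs_nonneg _) h2
  calc D.W x y * |u x - u y| * |v x - v y|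
      ≤ D.W x y * (2*M) * (2*N) := by
        apply mul_le_mul
        · exact mul_le_mul_of_nonneg_left h1 (D.Wnn x y)
        · exact h2
        · exact abs_nonneg _
        · exact mul_nonneg (D.Wnn x y) hM
    _ = D.W x y * (4 * M * N) := by ring

lemma rowAbsSummable {u v : V → ℝ} {M N : ℝ} (hu : ∀ x, |u x| ≤ M) (hv : ∀ x, |v x| ≤ N)
    (x : V) : Summable fun y => |D.row u v x y| :=
  Summable.of_nonneg_of_le (fun y => abs_nonneg _) (D.row_abs_le hu hv x)
    ((D.wsum x).mul_right _)

lemma rowSummable {u v : V → ℝ} {M N : ℝ} (hu : ∀ x, |u x| ≤ M) (hv : ∀ x, |v x| ≤ N)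
    (x : V) : Summable fun y => D.row u v x y :=
  (D.rowAbsSummable hu hv x).of_abs

lemma gradPair_nonneg (u : V → ℝ) (x : V) : 0 ≤ gradPair D.mu D.W u u x := by
  rw [D.gradPair_eq]
  have hx := D.hmu x
  exact mul_nonneg (by
    apply div_nonneg zero_le_one
    linarith) (tsum_nonneg (D.row_nonneg u x))

lemma Et_nonneg (u : V → ℝ) (x : V) : 0 ≤ D.Et u x := by
  have h1 := D.gradPair_nonneg u x
  have h2 := (D.hpos x).le
  have h3 := (D.hmu x).le
  have : 0 ≤ D.h x * u x ^ 2 := by positivity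
  exact mul_nonneg (by linarith) h3

lemma E_nonneg (u : V → ℝ) : 0 ≤ D.E u := tsum_nonneg (D.Et_nonneg u)

lemma Et_le_E {u : V → ℝ} (hs : Summable (D.Et u)) (x : V) : D.Et u x ≤ D.E u :=
  Summable.le_tsum hs x (fun y _ => D.Et_nonneg u y)

lemma sq_le_of_E_le {u : V → ℝ} {C2 : ℝ} (hs : Summable (D.Et u)) (hE : D.E u ≤ C2) (x : V) :
    u x ^ 2 ≤ C2 / (D.h0 * D.mu0) := by
  have h1 : D.h0 * D.mu0 * u x ^ 2 ≤ D.Et u x := by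
    unfold Et
    have h2 : D.h0 * u x ^ 2 ≤ D.h x * u x ^ 2 :=
      mul_le_mul_of_nonneg_right (D.h0le x) (sq_nonneg _)
    have h3 : D.h0 * u x ^ 2 * D.mu0 ≤ (D.h x * u x ^ 2) * D.mu x := by
      apply mul_le_mul h2 (D.mu0le x) D.hmu0.le
      have := D.hpos x
      nlinarith [sq_nonneg (u x)]
    have h4 := D.gradPair_nonneg u x
    nlinarith [D.hmu x, (mul_nonneg h4 (D.hmu x).le)]
  have h5 : D.h0 * D.mu0 * u x ^ 2 ≤ C2 := le_trans h1 (le_trans (D.Et_le_E hs x) hE)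
  have hpos : 0 < D.h0 * D.mu0 := mul_pos D.hh0 D.hmu0
  rw [le_div_iff₀ hpos]
  nlinarith [h5]

lemma abs_le_of_E_le {u : V → ℝ} {C2 : ℝ} (hs : Summable (D.Et u)) (hE : D.E u ≤ C2) (x : V) :
    |u x| ≤ Real.sqrt (C2 / (D.h0 * D.mu0)) := by
  have := D.sq_le_of_E_le hs hE x
  calc |u x| = Real.sqrt (u x ^ 2) := (Real.sqrt_sq_eq_abs _).symm
    _ ≤ _ := Real.sqrt_le_sqrt this

lemma bdd_of_summable_Et {u : V → ℝ} (hs : Summable (D.Et u)) : ∃ M, ∀ x, |u x| ≤ M :=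
  ⟨_, D.abs_le_of_E_le hs le_rfl⟩

/-- ℓ² summability. -/
lemma l2_summable {u : V → ℝ} (hs : Summable (D.Et u)) :
    Summable fun x => u x ^ 2 * D.mu x := by
  apply Summable.of_nonneg_of_le
    (fun x => mul_nonneg (sq_nonneg _) (D.hmu x).le) (fun x => ?_) (hs.mul_left (1/D.h0))
  have h2 : D.h0 * (u x ^2 * D.mu x) ≤ D.Et u x := by
    unfold Et
    have := D.gradPair_nonneg u x
    have h3 : D.h0 * u x ^ 2 ≤ D.h x * u x ^2 := mul_le_mul_of_nonneg_right (D.h0le x) (sq_nonneg _)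
    nlinarith [D.hmu x]
  rw [div_mul_eq_mul_div, le_div_iff₀ D.hh0, one_mul]
  linarith [h2]

lemma l2_tsum_le {u : V → ℝ} (hs : Summable (D.Et u)) :
    ∑' x, u x ^ 2 * D.mu x ≤ D.E u / D.h0 := by
  rw [le_div_iff₀ D.hh0]
  rw [← tsum_mul_right]
  apply Summable.tsum_le_tsum _ ((D.l2_summable hs).mul_right _) hs
  intro x
  unfold Et
  have := D.gradPair_nonneg u x
  have h3 : D.h0 * u x ^ 2 ≤ D.h x * u x ^2 := mul_le_mul_of_nonneg_right (D.h0le x) (sq_nonneg _)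
  nlinarith [D.hmu x]

end PSD

end Infra
namespace PSD

variable {V : Type*} (D : PSD V)

lemma abs_tsum_le' {ι : Type*} {f : ι → ℝ} (h : Summable fun i => |f i|) :
    |∑' i, f i| ≤ ∑' i, |f i| := by
  simpa [Real.norm_eq_abs] using
    norm_tsum_le_tsum_norm (f := f) (by simpa [Real.norm_eq_abs] using h)

lemma row_young (u v : V → ℝ) (x y : V) {t : ℝ} (ht : 0 < t) :
    |D.row u v x y| ≤ t/2 * D.row u u x y + 1/(2*t) * D.row v v x y := by
  unfold row
  have h1 : |D.W x y * (u x - u y) * (v x - v y)| = D.W x y * |(u x - u y) * (v x - v y)| := by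
    rw [mul_assoc, abs_mul, abs_of_nonneg (D.Wnn x y)]
  rw [h1]
  calc D.W x y * |(u x - u y) * (v x - v y)|
      ≤ D.W x y * (t/2 * (u x - u y)^2 + 1/(2*t) * (v x - v y)^2) :=
        mul_le_mul_of_nonneg_left (young_abs_mul ht) (D.Wnn x y)
    _ = t/2 * (D.W x y * (u x - u y) * (u x - u y))
        + 1/(2*t) * (D.W x y * (v x - v y) * (v x - v y)) := by ring

lemma gradPair_sub {u v w : V → ℝ} {M N P : ℝ} (hu : ∀ x, |u x| ≤ M) (hv : ∀ x, |v x| ≤ N)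
    (hw : ∀ x, |w x| ≤ P) (x : V) :
    gradPair D.mu D.W (fun z => u z - v z) w x
      = gradPair D.mu D.W u w x - gradPair D.mu D.W v w x := by
  rw [D.gradPair_eq, D.gradPair_eq, D.gradPair_eq, ← mul_sub]
  congr 1
  rw [← Summable.tsum_sub (D.rowSummable hu hw x) (D.rowSummable hv hw x)]
  exact tsum_congr fun y => by unfold row; ring

lemma gradPair_young {u v : V → ℝ} {M N : ℝ} (hu : ∀ x, |u x| ≤ M) (hv : ∀ x, |v x| ≤ N)
    (x : V) {t : ℝ} (ht : 0 < t) :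
    |gradPair D.mu D.W u v x|
      ≤ t/2 * gradPair D.mu D.W u u x + 1/(2*t) * gradPair D.mu D.W v v x := by
  rw [D.gradPair_eq u v, D.gradPair_eq u u, D.gradPair_eq v v]
  have hmux := D.hmu x
  have hc : 0 ≤ 1/(2*D.mu x) := by positivity
  rw [abs_mul, abs_of_nonneg hc]
  have hsum2 : Summable fun y => t/2 * D.row u u x y + 1/(2*t) * D.row v v x y :=
    ((D.rowSummable hu hu x).mul_left _).add ((D.rowSummable hv hv x).mul_left _)
  have h3 : |∑' y, D.row u v x y| ≤ ∑' y, (t/2 * D.row u u x y + 1/(2*t) * D.row v v x y) :=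
    le_trans (abs_tsum_le' (D.rowAbsSummable hu hv x))
      (Summable.tsum_le_tsum (fun y => D.row_young u v x y ht) (D.rowAbsSummable hu hv x) hsum2)
  rw [Summable.tsum_add ((D.rowSummable hu hu x).mul_left _) ((D.rowSummable hv hv x).mul_left _),
    tsum_mul_left, tsum_mul_left] at h3
  calc (1/(2*D.mu x)) * |∑' y, D.row u v x y|
      ≤ (1/(2*D.mu x)) * (t/2 * ∑' y, D.row u u x y + 1/(2*t) * ∑' y, D.row v v x y) :=
        mul_le_mul_of_nonneg_left h3 hc
    _ = t/2 * ((1/(2*D.mu x)) * ∑' y, D.row u u x y)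
        + 1/(2*t) * ((1/(2*D.mu x)) * ∑' y, D.row v v x y) := by ring

lemma Bt_abs_le {u v : V → ℝ} (hsu : Summable (D.Et u)) (hsv : Summable (D.Et v))
    {t : ℝ} (ht : 0 < t) (x : V) :
    |D.Bt u v x| ≤ t/2 * D.Et u x + 1/(2*t) * D.Et v x := by
  obtain ⟨M, hM⟩ := D.bdd_of_summable_Et hsu
  obtain ⟨N, hN⟩ := D.bdd_of_summable_Et hsv
  have hg := D.gradPair_young hM hN x ht
  have hh : |D.h x * u x * v x| ≤ D.h x * (t/2 * u x^2 + 1/(2*t) * v x^2) := by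
    rw [mul_assoc, abs_mul, abs_of_nonneg (D.hpos x).le]
    exact mul_le_mul_of_nonneg_left (young_abs_mul ht) (D.hpos x).le
  have hmu := (D.hmu x).le
  unfold Bt Et
  rw [abs_mul, abs_of_nonneg hmu]
  calc |gradPair D.mu D.W u v x + D.h x * u x * v x| * D.mu x
      ≤ ((t/2 * gradPair D.mu D.W u u x + 1/(2*t) * gradPair D.mu D.W v v x)
          + D.h x * (t/2 * u x^2 + 1/(2*t) * v x^2)) * D.mu x :=
        mul_le_mul_of_nonneg_right ((abs_add_le _ _).trans (add_le_add hg hh)) hmu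
    _ = t/2 * ((gradPair D.mu D.W u u x + D.h x * u x ^ 2) * D.mu x)
        + 1/(2*t) * ((gradPair D.mu D.W v v x + D.h x * v x ^ 2) * D.mu x) := by ring

lemma Bt_abs_summable {u v : V → ℝ} (hsu : Summable (D.Et u)) (hsv : Summable (D.Et v)) :
    Summable fun x => |D.Bt u v x| :=
  Summable.of_nonneg_of_le (fun x => abs_nonneg _)
    (fun x => D.Bt_abs_le hsu hsv one_pos x)
    ((hsu.mul_left _).add (hsv.mul_left _))

lemma Bt_summable {u v : V → ℝ} (hsu : Summable (D.Et u)) (hsv : Summable (D.Et v)) :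
    Summable (D.Bt u v) := (D.Bt_abs_summable hsu hsv).of_abs

lemma row_add_le (u v : V → ℝ) (x y : V) :
    D.row (fun z => u z + v z) (fun z => u z + v z) x y
      ≤ 2 * D.row u u x y + 2 * D.row v v x y := by
  unfold row
  beta_reduce
  nlinarith [mul_nonneg (D.Wnn x y) (sq_nonneg ((u x - u y) - (v x - v y)))]

lemma Et_add_le {u v : V → ℝ} (hsu : Summable (D.Et u)) (hsv : Summable (D.Et v)) (x : V) :
    D.Et (fun z => u z + v z) x ≤ 2 * D.Et u x + 2 * D.Et v x := by
  obtain ⟨M, hM⟩ := D.bdd_of_summable_Et hsu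
  obtain ⟨N, hN⟩ := D.bdd_of_summable_Et hsv
  have hw : ∀ z, |u z + v z| ≤ M + N := fun z => (abs_add_le _ _).trans (add_le_add (hM z) (hN z))
  have hgr : gradPair D.mu D.W (fun z => u z + v z) (fun z => u z + v z) x
      ≤ 2 * gradPair D.mu D.W u u x + 2 * gradPair D.mu D.W v v x := by
    rw [D.gradPair_eq, D.gradPair_eq, D.gradPair_eq]
    have hmux := D.hmu x
    have hc : 0 ≤ 1/(2*D.mu x) := by positivity
    have h3 : ∑' y, D.row (fun z => u z + v z) (fun z => u z + v z) x y
        ≤ ∑' y, (2 * D.row u u x y + 2 * D.row v v x y) :=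
      Summable.tsum_le_tsum (fun y => D.row_add_le u v x y) (D.rowSummable hw hw x)
        (((D.rowSummable hM hM x).mul_left _).add ((D.rowSummable hN hN x).mul_left _))
    rw [Summable.tsum_add ((D.rowSummable hM hM x).mul_left _) ((D.rowSummable hN hN x).mul_left _),
      tsum_mul_left, tsum_mul_left] at h3
    calc (1/(2*D.mu x)) * ∑' y, D.row (fun z => u z + v z) (fun z => u z + v z) x y
        ≤ (1/(2*D.mu x)) * (2 * ∑' y, D.row u u x y + 2 * ∑' y, D.row v v x y) :=
          mul_le_mul_of_nonneg_left h3 hc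
      _ = 2 * ((1/(2*D.mu x)) * ∑' y, D.row u u x y)
          + 2 * ((1/(2*D.mu x)) * ∑' y, D.row v v x y) := by ring
  have hhp : D.h x * (u x + v x)^2 ≤ 2 * (D.h x * u x^2) + 2 * (D.h x * v x^2) := by
    nlinarith [mul_nonneg (D.hpos x).le (sq_nonneg (u x - v x))]
  unfold Et
  have hmu := (D.hmu x).le
  calc (gradPair D.mu D.W (fun z => u z + v z) (fun z => u z + v z) x
        + D.h x * ((fun z => u z + v z) x) ^ 2) * D.mu x
      ≤ ((2 * gradPair D.mu D.W u u x + 2 * gradPair D.mu D.W v v x)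
        + (2 * (D.h x * u x^2) + 2 * (D.h x * v x^2))) * D.mu x := by
        apply mul_le_mul_of_nonneg_right _ hmu
        exact add_le_add hgr (by simpa using hhp)
    _ = 2 * ((gradPair D.mu D.W u u x + D.h x * u x ^ 2) * D.mu x)
        + 2 * ((gradPair D.mu D.W v v x + D.h x * v x ^ 2) * D.mu x) := by ring

lemma sumE_add {u v : V → ℝ} (hsu : Summable (D.Et u)) (hsv : Summable (D.Et v)) :
    Summable (D.Et (fun z => u z + v z)) :=
  Summable.of_nonneg_of_le (D.Et_nonneg _) (D.Et_add_le hsu hsv)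
    ((hsu.mul_left 2).add (hsv.mul_left 2))

lemma E_add_le {u v : V → ℝ} (hsu : Summable (D.Et u)) (hsv : Summable (D.Et v)) :
    D.E (fun z => u z + v z) ≤ 2 * D.E u + 2 * D.E v := by
  unfold E
  have h2 := Summable.tsum_le_tsum (D.Et_add_le hsu hsv) (D.sumE_add hsu hsv)
    ((hsu.mul_left 2).add (hsv.mul_left 2))
  rwa [Summable.tsum_add (hsu.mul_left 2) (hsv.mul_left 2), tsum_mul_left, tsum_mul_left] at h2

lemma Et_neg (u : V → ℝ) (x : V) : D.Et (fun z => -(u z)) x = D.Et u x := by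
  unfold Et
  rw [D.gradPair_eq, D.gradPair_eq]
  have : ∀ y, D.row (fun z => -(u z)) (fun z => -(u z)) x y = D.row u u x y := fun y => by
    unfold row; ring
  rw [tsum_congr this]
  ring

lemma sumE_neg {u : V → ℝ} (hsu : Summable (D.Et u)) :
    Summable (D.Et (fun z => -(u z))) := hsu.congr (fun x => (D.Et_neg u x).symm)

lemma sumE_sub {u v : V → ℝ} (hsu : Summable (D.Et u)) (hsv : Summable (D.Et v)) :
    Summable (D.Et (fun z => u z - v z)) := by
  rw [show (fun z : V => u z - v z) = (fun z => u z + -(v z)) from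
    funext fun z => sub_eq_add_neg _ _]
  exact D.sumE_add hsu (D.sumE_neg hsv)

lemma E_sub_le {u v : V → ℝ} (hsu : Summable (D.Et u)) (hsv : Summable (D.Et v)) :
    D.E (fun z => u z - v z) ≤ 2 * D.E u + 2 * D.E v := by
  have h1 : D.E (fun z => u z - v z) = D.E (fun z => u z + -(v z)) :=
    congrArg D.E (funext fun z => sub_eq_add_neg _ _)
  have h2 : D.E (fun z => -(v z)) = D.E v := by
    unfold E; exact tsum_congr (D.Et_neg v)
  rw [h1]
  calc D.E (fun z => u z + -(v z)) ≤ 2 * D.E u + 2 * D.E (fun z => -(v z)) :=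
        D.E_add_le hsu (D.sumE_neg hsv)
    _ = 2 * D.E u + 2 * D.E v := by rw [h2]

lemma Et_smul (c : ℝ) (u : V → ℝ) (x : V) :
    D.Et (fun z => c * u z) x = c^2 * D.Et u x := by
  unfold Et
  rw [D.gradPair_eq, D.gradPair_eq]
  have : ∀ y, D.row (fun z => c * u z) (fun z => c * u z) x y = c^2 * D.row u u x y :=
    fun y => by unfold row; ring
  rw [tsum_congr this, tsum_mul_left]
  ring

lemma E_smul (c : ℝ) (u : V → ℝ) : D.E (fun z => c * u z) = c^2 * D.E u := by
  unfold E
  rw [tsum_congr (D.Et_smul c u), tsum_mul_left]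

lemma sumE_smul {u : V → ℝ} (c : ℝ) (hsu : Summable (D.Et u)) :
    Summable (D.Et (fun z => c * u z)) :=
  (hsu.mul_left (c^2)).congr (fun x => (D.Et_smul c u x).symm)

lemma Et_eq_Bt_sub {u v : V → ℝ} (hsu : Summable (D.Et u)) (hsv : Summable (D.Et v)) (x : V) :
    D.Et (fun z => u z - v z) x
      = D.Bt u (fun z => u z - v z) x - D.Bt v (fun z => u z - v z) x := by
  obtain ⟨M, hM⟩ := D.bdd_of_summable_Et hsu
  obtain ⟨N, hN⟩ := D.bdd_of_summable_Et hsv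
  have hw : ∀ z, |u z - v z| ≤ M + N := fun z => (abs_sub _ _).trans (add_le_add (hM z) (hN z))
  unfold Et Bt
  rw [D.gradPair_sub hM hN hw x]
  beta_reduce
  ring

lemma E_expansion {u v : V → ℝ} (hsu : Summable (D.Et u)) (hsv : Summable (D.Et v)) :
    D.E (fun z => u z - v z)
      = (∑' x, D.Bt u (fun z => u z - v z) x) - ∑' x, D.Bt v (fun z => u z - v z) x := by
  unfold E
  rw [← Summable.tsum_sub (D.Bt_summable hsu (D.sumE_sub hsu hsv))
    (D.Bt_summable hsv (D.sumE_sub hsu hsv))]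
  exact tsum_congr (D.Et_eq_Bt_sub hsu hsv)

lemma Et_eq' (u : V → ℝ) (x : V) :
    D.Et u x = (1/2) * ∑' y, D.row u u x y + D.h x * u x^2 * D.mu x := by
  unfold Et
  rw [D.gradPair_eq]
  have hx := (D.hmu x).ne'
  field_simp

lemma sumE_of_finite_support {a : V → ℝ} (ha : (Function.support a).Finite) :
    Summable (D.Et a) := by
  obtain ⟨M, hM⟩ := bdd_of_finite_support ha
  classical
  set G := ha.toFinset with hG
  have hmem : ∀ x, x ∉ G → a x = 0 := by
    intro x hx
    by_contra hne
    exact hx (by rw [hG, Set.Finite.mem_toFinset]; exact hne)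
  have key : ∀ x, D.Et a x
      ≤ a x ^2 * (∑' y, D.W x y) + ∑ y ∈ G, D.W x y * a y ^ 2 + D.h x * a x^2 * D.mu x := by
    intro x
    rw [D.Et_eq']
    have hrow : ∀ y, D.row a a x y ≤ 2 * (D.W x y * a x ^2) + 2 * (D.W x y * a y ^2) := by
      intro y
      unfold row
      nlinarith [mul_nonneg (D.Wnn x y) (sq_nonneg (a x + a y))]
    have hs1 : Summable fun y => 2 * (D.W x y * a x ^2) + 2 * (D.W x y * a y ^2) := by
      apply Summable.add
      · exact (((D.wsum x).mul_right (a x ^2)).mul_left 2)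
      · apply Summable.mul_left
        apply summable_of_ne_finset_zero (s := G)
        intro y hy
        rw [hmem y hy]
        ring
    have h4 : ∑' y, D.row a a x y
        ≤ ∑' y, (2 * (D.W x y * a x ^2) + 2 * (D.W x y * a y ^2)) :=
      Summable.tsum_le_tsum hrow (D.rowSummable hM hM x) hs1
    have h5 : ∑' y, (2 * (D.W x y * a x ^2) + 2 * (D.W x y * a y ^2))
        = 2 * (a x^2 * ∑' y, D.W x y) + 2 * ∑ y ∈ G, D.W x y * a y ^2 := by
      rw [Summable.tsum_add (((D.wsum x).mul_right (a x ^2)).mul_left 2)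
        (Summable.mul_left 2 (summable_of_ne_finset_zero (s := G)
          (fun y hy => by rw [hmem y hy]; ring)))]
      congr 1
      · rw [tsum_mul_left]
        have : ∑' y, D.W x y * a x ^2 = (∑' y, D.W x y) * a x ^2 := tsum_mul_right
        rw [this]; ring
      · rw [tsum_mul_left]
        congr 1
        exact tsum_eq_sum (fun y hy => by rw [hmem y hy]; ring)
    nlinarith [h4, h5]
  apply Summable.of_nonneg_of_le (D.Et_nonneg a) key
  apply Summable.add
  apply Summable.add
  · apply summable_of_ne_finset_zero (s := G)
    intro x hx
    rw [hmem x hx]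
    ring
  · apply summable_sum (s := G)
    intro y _
    have hsy : Summable fun x => D.W x y := (D.wsum y).congr (fun x => D.symm y x)
    exact hsy.mul_right (a y ^2)
  · apply summable_of_ne_finset_zero (s := G)
    intro x hx
    rw [hmem x hx]
    ring

end PSD
namespace PSD

open Filter Topology

variable {V : Type*} (D : PSD V)

lemma fatouE {w : ℕ → V → ℝ} {winf : V → ℝ} {C2 : ℝ}
    (hs : ∀ j, Summable (D.Et (w j))) (hE : ∀ j, D.E (w j) ≤ C2)
    (hlim : ∀ x, Tendsto (fun j => w j x) atTop (𝓝 (winf x))) :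
    Summable (D.Et winf) ∧ D.E winf ≤ C2 := by
  have hbdd : ∀ j x, |w j x| ≤ Real.sqrt (C2 / (D.h0 * D.mu0)) :=
    fun j x => D.abs_le_of_E_le (hs j) (hE j) x
  have hbinf : ∀ x, |winf x| ≤ Real.sqrt (C2 / (D.h0 * D.mu0)) := fun x =>
    le_of_tendsto (hlim x).abs (Eventually.of_forall fun j => hbdd j x)
  have key : ∀ F : Finset V, ∑ x ∈ F, D.Et winf x ≤ C2 := by
    intro F
    have hnet : Tendsto (fun G : Finset V => ∑ x ∈ F,
        ((1/(2*D.mu x)) * ∑ y ∈ G, D.row winf winf x y + D.h x * winf x ^2) * D.mu x)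
        atTop (𝓝 (∑ x ∈ F, D.Et winf x)) := by
      apply tendsto_finset_sum
      intro x _
      have hrs : Tendsto (fun G : Finset V => ∑ y ∈ G, D.row winf winf x y) atTop
          (𝓝 (∑' y, D.row winf winf x y)) := (D.rowSummable hbinf hbinf x).hasSum
      have heq : D.Et winf x
          = ((1/(2*D.mu x)) * (∑' y, D.row winf winf x y) + D.h x * winf x ^2) * D.mu x := rfl
      rw [heq]
      exact ((hrs.const_mul _).add tendsto_const_nhds).mul_const _
    have hGbound : ∀ G : Finset V, ∑ x ∈ F,
        ((1/(2*D.mu x)) * ∑ y ∈ G, D.row winf winf x y + D.h x * winf x ^2) * D.mu x ≤ C2 := by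
      intro G
      have hjten : Tendsto (fun j => ∑ x ∈ F,
          ((1/(2*D.mu x)) * ∑ y ∈ G, D.row (w j) (w j) x y + D.h x * (w j x)^2) * D.mu x) atTop
          (𝓝 (∑ x ∈ F,
          ((1/(2*D.mu x)) * ∑ y ∈ G, D.row winf winf x y + D.h x * (winf x)^2) * D.mu x)) := by
        apply tendsto_finset_sum
        intro x _
        apply Tendsto.mul_const
        apply Tendsto.add
        · apply Tendsto.const_mul
          apply tendsto_finset_sum
          intro y _
          simp only [PSD.row]
          exact (tendsto_const_nhds.mul ((hlim x).sub (hlim y))).mul ((hlim x).sub (hlim y))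
        · exact tendsto_const_nhds.mul ((hlim x).pow 2)
      apply le_of_tendsto hjten
      apply Eventually.of_forall
      intro j
      have hterm : ∀ x ∈ F,
          ((1/(2*D.mu x)) * ∑ y ∈ G, D.row (w j) (w j) x y + D.h x * (w j x)^2) * D.mu x
            ≤ D.Et (w j) x := by
        intro x _
        have h1 : ∑ y ∈ G, D.row (w j) (w j) x y ≤ ∑' y, D.row (w j) (w j) x y :=
          Summable.sum_le_tsum G (fun y _ => D.row_nonneg _ x y) (D.rowSummable (hbdd j) (hbdd j) x)
        have hmux := D.hmu x
        have hc : (0:ℝ) ≤ 1/(2*D.mu x) := by positivity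
        unfold Et
        rw [D.gradPair_eq]
        exact mul_le_mul_of_nonneg_right
          (add_le_add (mul_le_mul_of_nonneg_left h1 hc) le_rfl) hmux.le
      calc ∑ x ∈ F, ((1/(2*D.mu x)) * ∑ y ∈ G, D.row (w j) (w j) x y
              + D.h x * (w j x)^2) * D.mu x
          ≤ ∑ x ∈ F, D.Et (w j) x := Finset.sum_le_sum hterm
        _ ≤ D.E (w j) := Summable.sum_le_tsum F (fun x _ => D.Et_nonneg _ x) (hs j)
        _ ≤ C2 := hE j
    exact le_of_tendsto hnet (Eventually.of_forall hGbound)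
  have hsum : Summable (D.Et winf) := summable_of_sum_le (D.Et_nonneg winf) key
  exact ⟨hsum, Summable.tsum_le_of_sum_le hsum key⟩

lemma tsum_subtype_le_of_nonneg {f : V → ℝ} (hf : Summable f) (hnn : ∀ x, 0 ≤ f x) (s : Set V) :
    ∑' (x : s), f x ≤ ∑' x, f x := by
  rw [tsum_subtype]
  exact Summable.tsum_le_tsum (fun x => Set.indicator_le_self' (fun y _ => hnn y) x) (hf.indicator s) hf

lemma l2_conv {v : ℕ → V → ℝ} {u0 : V → ℝ} {C2 : ℝ}
    (hco : ∀ M : ℝ, {x : V | D.h x ≤ M}.Finite)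
    (hs : ∀ k, Summable (D.Et (fun x => v k x - u0 x)))
    (hEd : ∀ k, D.E (fun x => v k x - u0 x) ≤ C2)
    (hlim : ∀ x, Tendsto (fun k => v k x) atTop (𝓝 (u0 x))) :
    Tendsto (fun k => ∑' x, (v k x - u0 x)^2 * D.mu x) atTop (𝓝 0) := by
  classical
  have hC2 : 0 ≤ C2 := le_trans (D.E_nonneg _) (hEd 0)
  rw [Metric.tendsto_atTop]
  intro ε hε
  set M : ℝ := 2*C2/ε + 1 with hM
  have hMpos : 0 < M := by positivity
  have hCM : C2 / M < ε/2 := by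
    rw [div_lt_iff₀ hMpos]
    have h2 : ε/2 * M = C2 + ε/2 := by rw [hM]; field_simp
    linarith [h2, hε]
  set S : Finset V := (hco M).toFinset with hS
  have hl2 : ∀ k, Summable fun x => (v k x - u0 x)^2 * D.mu x := fun k => D.l2_summable (hs k)
  have tail : ∀ k, ∑' (x : {x // x ∉ S}), ((v k x - u0 x)^2 * D.mu x) ≤ C2 / M := by
    intro k
    have hterm : ∀ x : {x // x ∉ S}, (v k (x:V) - u0 x)^2 * D.mu x
        ≤ (1/M) * D.Et (fun z => v k z - u0 z) (x:V) := by
      rintro ⟨x, hx⟩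
      have hhx : M < D.h x := by
        by_contra hcon
        exact hx (by rw [hS, Set.Finite.mem_toFinset]; exact Set.mem_setOf_eq ▸ not_lt.1 hcon)
      have h1 : M * ((v k x - u0 x)^2 * D.mu x) ≤ D.Et (fun z => v k z - u0 z) x := by
        have hg := D.gradPair_nonneg (fun z => v k z - u0 z) x
        have heq : D.Et (fun z => v k z - u0 z) x
            = (gradPair D.mu D.W (fun z => v k z - u0 z) (fun z => v k z - u0 z) x
              + D.h x * (v k x - u0 x)^2) * D.mu x := rfl
        rw [heq]
        have hmux := D.hmu x
        nlinarith [sq_nonneg (v k x - u0 x), mul_nonneg hg hmux.le,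
          mul_nonneg (mul_nonneg (sub_nonneg.2 hhx.le) (sq_nonneg (v k x - u0 x))) hmux.le]
      have h3 : (v k x - u0 x)^2 * D.mu x ≤ (1/M) * D.Et (fun z => v k z - u0 z) x := by
        calc (v k x - u0 x)^2 * D.mu x ≤ D.Et (fun z => v k z - u0 z) x / M :=
              (le_div_iff₀' hMpos).2 h1
          _ = (1/M) * D.Et (fun z => v k z - u0 z) x := by ring
      exact h3
    calc ∑' (x : {x // x ∉ S}), ((v k x - u0 x)^2 * D.mu x)
        ≤ ∑' (x : {x // x ∉ S}), (1/M) * D.Et (fun z => v k z - u0 z) (x:V) :=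
          Summable.tsum_le_tsum hterm ((hl2 k).subtype _) (((hs k).subtype _).mul_left _)
      _ = (1/M) * ∑' (x : {x // x ∉ S}), D.Et (fun z => v k z - u0 z) (x:V) := tsum_mul_left
      _ ≤ (1/M) * D.E (fun z => v k z - u0 z) := by
          apply mul_le_mul_of_nonneg_left _ (by positivity)
          exact tsum_subtype_le_of_nonneg (hs k) (D.Et_nonneg _) _
      _ ≤ (1/M) * C2 := mul_le_mul_of_nonneg_left (hEd k) (by positivity)
      _ = C2 / M := by ring
  have finpart : Tendsto (fun k => ∑ x ∈ S, (v k x - u0 x)^2 * D.mu x) atTop (𝓝 0) := by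
    have : ∀ x ∈ S, Tendsto (fun k => (v k x - u0 x)^2 * D.mu x) atTop (𝓝 0) := by
      intro x _
      have h1 : Tendsto (fun k => v k x - u0 x) atTop (𝓝 0) := by
        simpa using (hlim x).sub_const (u0 x)
      simpa using (h1.pow 2).mul_const (D.mu x)
    simpa using tendsto_finset_sum S this
  obtain ⟨N, hN⟩ := (Metric.tendsto_atTop.1 finpart) (ε/2 - C2/M) (by linarith)
  refine ⟨N, fun n hn => ?_⟩
  have hsplit := Summable.sum_add_tsum_compl (s := S) (hl2 n)
  have hfin := hN n hn
  rw [Real.dist_eq, sub_zero] at hfin ⊢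
  have hfinnn : 0 ≤ ∑ x ∈ S, (v n x - u0 x)^2 * D.mu x :=
    Finset.sum_nonneg fun x _ => mul_nonneg (sq_nonneg _) (D.hmu x).le
  have htn : 0 ≤ ∑' x, (v n x - u0 x)^2 * D.mu x :=
    tsum_nonneg fun x => mul_nonneg (sq_nonneg _) (D.hmu x).le
  rw [abs_of_nonneg hfinnn] at hfin
  rw [abs_of_nonneg htn]
  have := tail n
  calc ∑' x, (v n x - u0 x)^2 * D.mu x
      = ∑ x ∈ S, (v n x - u0 x)^2 * D.mu x
        + ∑' (x : {x // x ∉ S}), ((v n x - u0 x)^2 * D.mu x) := hsplit.symm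
    _ < (ε/2 - C2/M) + C2/M := by
        apply add_lt_add_of_lt_of_le hfin this
    _ ≤ ε := by linarith

end PSD
namespace PSD

open Filter Topology

variable {V : Type*} (D : PSD V)

lemma normHs_eq (u : V → ℝ) : normHs D.mu D.W D.h u = Real.sqrt (D.E u) := rfl

lemma Jp_eq (f : V → ℝ → ℝ) (u : V → ℝ) :
    Jp D.mu D.W D.h f u = (1/2) * D.E u - ∑' x, Fprim f x (max (u x) 0) * D.mu x := rfl

lemma JpDeriv_eq (f : V → ℝ → ℝ) (v w : V → ℝ) :
    JpDeriv D.mu D.W D.h f v w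
      = (∑' x, D.Bt v w x) - ∑' x, f x (max (v x) 0) * w x * D.mu x := rfl

lemma memHs_summable {u : V → ℝ} (hu : memHs D.mu D.W D.h u) : Summable (D.Et u) := hu.1

lemma sq_normHs (u : V → ℝ) : (normHs D.mu D.W D.h u)^2 = D.E u := by
  rw [D.normHs_eq]; exact Real.sq_sqrt (D.E_nonneg u)

lemma normHs_nonneg (u : V → ℝ) : 0 ≤ normHs D.mu D.W D.h u := Real.sqrt_nonneg _

lemma normHs_smul (c : ℝ) (u : V → ℝ) :
    normHs D.mu D.W D.h (fun x => c * u x) = |c| * normHs D.mu D.W D.h u := by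
  rw [D.normHs_eq, D.normHs_eq, D.E_smul, Real.sqrt_mul (sq_nonneg c), Real.sqrt_sq_eq_abs]

lemma normHs_zero_iff {w : V → ℝ} (hsw : Summable (D.Et w))
    (hz : normHs D.mu D.W D.h w = 0) (x : V) : w x = 0 := by
  rw [D.normHs_eq] at hz
  have hE0 : D.E w = 0 := le_antisymm (Real.sqrt_eq_zero'.1 hz) (D.E_nonneg w)
  have h1 : D.Et w x ≤ 0 := hE0 ▸ D.Et_le_E hsw x
  have h3 : D.Et w x = 0 := le_antisymm h1 (D.Et_nonneg w x)
  have hg := D.gradPair_nonneg w x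
  have hmux := D.hmu x
  have hhx := D.hpos x
  by_contra hne
  have h4 : 0 < D.h x * w x ^ 2 := by positivity
  have h5 : 0 < D.Et w x := by
    have heq : D.Et w x = (gradPair D.mu D.W w w x + D.h x * w x ^ 2) * D.mu x := rfl
    rw [heq]; positivity
  linarith

lemma memHs_smul (c : ℝ) {u : V → ℝ} (hu : memHs D.mu D.W D.h u) :
    memHs D.mu D.W D.h (fun x => c * u x) := by
  obtain ⟨hs, a, hafin, haten⟩ := hu
  refine ⟨D.sumE_smul c hs, fun k x => c * a k x, ?_, ?_⟩
  · intro k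
    apply (hafin k).subset
    intro x hx
    simp only [Function.mem_support] at hx ⊢
    intro hz; exact hx (by rw [hz, mul_zero])
  · have heq : ∀ k, normHs D.mu D.W D.h (fun x => c * a k x - c * u x)
        = |c| * normHs D.mu D.W D.h (fun x => a k x - u x) := by
      intro k
      rw [show (fun x => c * a k x - c * u x) = (fun x => c * (a k x - u x)) from
        funext fun x => by ring]
      exact D.normHs_smul c _
    rw [show (fun k => normHs D.mu D.W D.h fun x => c * a k x - c * u x)
      = (fun k => |c| * normHs D.mu D.W D.h (fun x => a k x - u x)) from funext heq]
    simpa using haten.const_mul |c|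

lemma memHs_sub {p q : V → ℝ} (hp : memHs D.mu D.W D.h p) (hq : memHs D.mu D.W D.h q) :
    memHs D.mu D.W D.h (fun x => p x - q x) := by
  obtain ⟨hsp, a, hafin, haten⟩ := hp
  obtain ⟨hsq, b, hbfin, hbten⟩ := hq
  refine ⟨D.sumE_sub hsp hsq, fun k x => a k x - b k x, ?_, ?_⟩
  · intro k
    apply ((hafin k).union (hbfin k)).subset
    intro x hx
    simp only [Function.mem_support] at hx
    by_contra hcon
    simp only [Set.mem_union, Function.mem_support, not_or, not_not] at hcon
    exact hx (by rw [hcon.1, hcon.2, sub_zero])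
  · -- squeeze
    have hsak : ∀ k, Summable (D.Et (fun x => a k x - p x)) :=
      fun k => D.sumE_sub (D.sumE_of_finite_support (hafin k)) hsp
    have hsbk : ∀ k, Summable (D.Et (fun x => b k x - q x)) :=
      fun k => D.sumE_sub (D.sumE_of_finite_support (hbfin k)) hsq
    apply squeeze_zero (fun k => D.normHs_nonneg _)
      (g := fun k => Real.sqrt (2 * (normHs D.mu D.W D.h (fun x => a k x - p x))^2
        + 2 * (normHs D.mu D.W D.h (fun x => b k x - q x))^2))
    · intro k
      rw [D.normHs_eq]
      apply Real.sqrt_le_sqrt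
      rw [D.sq_normHs, D.sq_normHs]
      have heq : (fun x => (a k x - b k x) - (p x - q x))
          = (fun x => (a k x - p x) + -((b k x - q x))) := funext fun x => by ring
      calc D.E (fun x => (a k x - b k x) - (p x - q x))
          = D.E (fun x => (a k x - p x) + -((b k x - q x))) := by rw [heq]
        _ ≤ 2 * D.E (fun x => a k x - p x) + 2 * D.E (fun x => -((b k x - q x))) :=
            D.E_add_le (hsak k) (D.sumE_neg (hsbk k))
        _ = 2 * D.E (fun x => a k x - p x) + 2 * D.E (fun x => b k x - q x) := by
            congr 1
            congr 1
            exact tsum_congr (D.Et_neg _)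
    · have h1 : Tendsto (fun k => 2 * (normHs D.mu D.W D.h (fun x => a k x - p x))^2
          + 2 * (normHs D.mu D.W D.h (fun x => b k x - q x))^2) atTop (𝓝 0) := by
        have ha2 := (haten.pow 2).const_mul (2:ℝ)
        have hb2 := (hbten.pow 2).const_mul (2:ℝ)
        simpa using ha2.add hb2
      simpa using h1.sqrt

lemma gradPair_zero (x : V) :
    gradPair D.mu D.W (fun _ : V => (0:ℝ)) (fun _ => (0:ℝ)) x = 0 := by
  unfold gradPair; simp

lemma normHs_zero_fun : normHs D.mu D.W D.h (fun _ : V => (0:ℝ)) = 0 := by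
  unfold normHs
  simp [D.gradPair_zero]

lemma memHs_zero : memHs D.mu D.W D.h (fun _ => (0:ℝ)) := by
  constructor
  · apply summable_zero.congr
    intro x
    symm
    simp [D.gradPair_zero]
  · refine ⟨fun _ _ => 0, fun k => by simp, ?_⟩
    have heq : (fun k : ℕ =>
        normHs D.mu D.W D.h fun x => (fun _ _ => (0:ℝ)) k x - (fun _ => (0:ℝ)) x)
        = fun _ : ℕ => (0:ℝ) := by
      funext k
      rw [show (fun x : V => (fun _ _ => (0:ℝ)) k x - (fun _ : V => (0:ℝ)) x)
        = (fun _ : V => (0:ℝ)) from funext fun x => by simp]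
      exact D.normHs_zero_fun
    rw [heq]
    exact tendsto_const_nhds

lemma JpDeriv_smul (f : V → ℝ → ℝ) (v : V → ℝ) (c : ℝ) (w : V → ℝ) :
    JpDeriv D.mu D.W D.h f v (fun x => c * w x) = c * JpDeriv D.mu D.W D.h f v w := by
  unfold JpDeriv
  have h1 : ∀ x, gradPair D.mu D.W v (fun z => c * w z) x = c * gradPair D.mu D.W v w x := by
    intro x
    unfold gradPair
    rw [show (∑' y, D.W x y * (v x - v y) * ((fun z => c * w z) x - (fun z => c * w z) y))
      = ∑' y, c * (D.W x y * (v x - v y) * (w x - w y)) from tsum_congr fun y => by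
        beta_reduce; ring]
    rw [tsum_mul_left]
    ring
  have h2 : (∑' x, (gradPair D.mu D.W v (fun z => c * w z) x
        + D.h x * v x * ((fun z => c * w z) x)) * D.mu x)
      = c * ∑' x, (gradPair D.mu D.W v w x + D.h x * v x * w x) * D.mu x := by
    rw [← tsum_mul_left]
    apply tsum_congr
    intro x
    rw [h1 x]
    beta_reduce
    ring
  have h3 : (∑' x, f x (max (v x) 0) * ((fun z => c * w z) x) * D.mu x)
      = c * ∑' x, f x (max (v x) 0) * w x * D.mu x := by
    rw [← tsum_mul_left]
    apply tsum_congr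
    intro x
    beta_reduce
    ring
  rw [h2, h3]
  ring

end PSD
set_option maxHeartbeats 3000000 in
/-- Under (F1)–(F4), with `μ` bounded away from `0` and `h` coercive, `J_+` satisfies the
Palais–Smale condition at every level `c`. -/
theorem palais_smale_condition
    {V : Type*} [Countable V] [Infinite V]
    (μ : V → ℝ) (hμ : ∀ x, 0 < μ x) (hμ0 : 0 < ⨅ x, μ x)
    (W : V → V → ℝ)
    (hWsymm : ∀ x y, W x y = W y x)
    (hWdiag : ∀ x, W x x = 0)
    (hWnonneg : ∀ x y, 0 ≤ W x y)
    (hWsum : ∀ x, Summable fun y => W x y)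
    (h : V → ℝ) (hh0 : 0 < ⨅ x, h x)
    (hhcoer : ∀ M : ℝ, {x : V | h x ≤ M}.Finite)
    (f : V → ℝ → ℝ)
    (hf1 : ∀ x, Continuous (f x) ∧ f x 0 = 0)
    (hf2 : ∀ M : ℝ, 0 < M → ∃ C : ℝ, ∀ x, ∀ y : ℝ, |y| ≤ M → |f x y| ≤ C)
    (α : ℝ) (hα : 2 < α)
    (hf3 : ∀ x, ∀ y : ℝ, y ≠ 0 →
      0 < α * Fprim f x y ∧ α * Fprim f x y ≤ y * f x y)
    (hf4 : ∃ ε > (0:ℝ), ∃ δ > (0:ℝ), ∀ x, ∀ y : ℝ, y ≠ 0 → |y| < δ →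
      f x y / y ≤ lam1 μ W h - ε)
    (c : ℝ) (u : ℕ → V → ℝ) (hu : ∀ n, memHs μ W h (u n))
    (hJc : Tendsto (fun n => Jp μ W h f (u n)) atTop (𝓝 c))
    (hJ' : ∃ ε : ℕ → ℝ, Tendsto ε atTop (𝓝 0) ∧
      ∀ n, ∀ φ : V → ℝ, memHs μ W h φ → normHs μ W h φ ≤ 1 →
        |JpDeriv μ W h f (u n) φ| ≤ ε n) :
    ∃ φ : ℕ → ℕ, StrictMono φ ∧ ∃ u₀ : V → ℝ, memHs μ W h u₀ ∧
      Tendsto (fun n => normHs μ W h (fun x => u (φ n) x - u₀ x)) atTop (𝓝 0) := by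
  classical
  obtain ⟨ε, hε0, hεb⟩ := hJ'
  -- Construct the data bundle
  have hbddmu : BddBelow (Set.range μ) := ⟨0, by rintro _ ⟨x, rfl⟩; exact (hμ x).le⟩
  have hbddh : BddBelow (Set.range h) := by
    by_contra hc
    rw [iInf, Real.sInf_of_not_bddBelow hc] at hh0
    exact lt_irrefl _ hh0
  let D : PSD V :=
    { mu := μ, W := W, h := h, hmu := hμ, symm := hWsymm, Wnn := hWnonneg, wsum := hWsum,
      mu0 := ⨅ x, μ x, h0 := ⨅ x, h x, hmu0 := hμ0, hh0 := hh0,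
      mu0le := fun x => ciInf_le hbddmu x, h0le := fun x => ciInf_le hbddh x }
  have hαpos : (0:ℝ) < α := by linarith
  have hnormE : ∀ w : V → ℝ, normHs μ W h w = Real.sqrt (D.E w) := fun w => D.normHs_eq w
  -- ε n is nonnegative
  have hεnn : ∀ n, 0 ≤ ε n := by
    intro n
    have h0' := hεb n (fun _ => 0) D.memHs_zero
      (by rw [D.normHs_zero_fun]; norm_num)
    calc (0:ℝ) ≤ |JpDeriv μ W h f (u n) (fun _ => 0)| := abs_nonneg _
      _ ≤ ε n := h0'
  -- derivative bound against arbitrary memHs test functions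
  have JD_bound : ∀ n (w : V → ℝ), memHs μ W h w →
      |JpDeriv μ W h f (u n) w| ≤ ε n * normHs μ W h w := by
    intro n w hw
    have hsw : Summable (D.Et w) := D.memHs_summable hw
    by_cases hz : normHs μ W h w = 0
    · have hwx : ∀ x, w x = 0 := fun x => D.normHs_zero_iff hsw hz x
      have hJD0 : JpDeriv μ W h f (u n) w = 0 := by
        unfold JpDeriv
        have hg : ∀ x, gradPair μ W (u n) w x = 0 := by
          intro x
          unfold gradPair
          rw [show (∑' y, W x y * (u n x - u n y) * (w x - w y)) = ∑' y : V, (0:ℝ) from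
            tsum_congr fun y => by rw [hwx x, hwx y]; ring]
          simp
        rw [show (∑' x, (gradPair μ W (u n) w x + h x * u n x * w x) * μ x)
          = ∑' x : V, (0:ℝ) from tsum_congr fun x => by rw [hg x, hwx x]; ring]
        rw [show (∑' x, f x (max (u n x) 0) * w x * μ x) = ∑' x : V, (0:ℝ) from
          tsum_congr fun x => by rw [hwx x]; ring]
        simp
      rw [hJD0, hz]
      simp
    · have hEw : 0 < D.E w := by
        rcases lt_or_eq_of_le (D.E_nonneg w) with h' | h'
        · exact h'
        · exact absurd (by rw [D.normHs_eq, ← h', Real.sqrt_zero]) hz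
      have hcpos : 0 < normHs μ W h w := by
        rcases lt_or_eq_of_le (D.normHs_nonneg w) with h' | h'
        · exact h'
        · exact absurd h'.symm hz
      set cc : ℝ := normHs μ W h w with hcc
      have hmemφ : memHs μ W h (fun x => cc⁻¹ * w x) := D.memHs_smul cc⁻¹ hw
      have hnφ : normHs μ W h (fun x => cc⁻¹ * w x) = 1 := by
        rw [D.normHs_smul cc⁻¹ w, abs_of_pos (inv_pos.2 hcpos), ← hcc]
        field_simp
      have hb := hεb n _ hmemφ (le_of_eq hnφ)
      rw [D.JpDeriv_smul f (u n) cc⁻¹ w, abs_mul, abs_of_pos (inv_pos.2 hcpos)] at hb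
      calc |JpDeriv μ W h f (u n) w| = cc * (cc⁻¹ * |JpDeriv μ W h f (u n) w|) := by
            field_simp
        _ ≤ cc * ε n := mul_le_mul_of_nonneg_left hb hcpos.le
        _ = ε n * cc := mul_comm _ _
  -- bounds on Jp and ε
  obtain ⟨CJ₀, hCJ₀⟩ := bdd_of_tendsto hJc
  obtain ⟨Cε₀, hCε₀⟩ := bdd_of_tendsto hε0
  set CJ : ℝ := max CJ₀ 0 with hCJdef
  set Cε : ℝ := max Cε₀ 0 with hCεdef
  have hCJ : ∀ n, |Jp μ W h f (u n)| ≤ CJ := fun n => (hCJ₀ n).trans (le_max_left _ _)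
  have hCε : ∀ n, ε n ≤ Cε := fun n => (le_abs_self _).trans ((hCε₀ n).trans (le_max_left _ _))
  have hCJnn : 0 ≤ CJ := le_max_right _ _
  have hCεnn : 0 ≤ Cε := le_max_right _ _
  set β : ℝ := 1/2 - 1/α with hβdef
  have hβpos : 0 < β := by
    rw [hβdef]
    have : 1/α < 1/2 := by
      rw [div_lt_div_iff₀ hαpos (by norm_num)]
      linarith
    linarith
  set C : ℝ := max 1 ((CJ + Cε)/β) with hCdef
  have hC1 : (1:ℝ) ≤ C := le_max_left _ _
  have hCpos : (0:ℝ) < C := lt_of_lt_of_le one_pos hC1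
  have hCge : (CJ + Cε)/β ≤ C := le_max_right _ _
  clear_value CJ Cε β C
  -- f-machinery (generalized bound constant for arbitrary sup-bound R')
  obtain ⟨εl, hεlpos, δ, hδpos, hf4'⟩ := hf4
  have hfKgen : ∀ R' : ℝ, 0 < R' → ∃ K', 0 < K' ∧
      ∀ x (y : ℝ), |y| ≤ R' → |f x (max y 0)| ≤ K' * |y| := by
    intro R' hR'
    obtain ⟨CR, hCR⟩ := hf2 R' hR'
    have hCRnn : 0 ≤ CR := by
      obtain ⟨x0⟩ : Nonempty V := inferInstance
      exact le_trans (abs_nonneg _) (hCR x0 0 (by rw [abs_zero]; exact hR'.le))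
    refine ⟨max (max (lam1 μ W h - εl) (CR/δ)) 1,
      lt_of_lt_of_le one_pos (le_max_right _ _), ?_⟩
    set K' : ℝ := max (max (lam1 μ W h - εl) (CR/δ)) 1 with hKdef'
    have hKpos' : (0:ℝ) < K' := lt_of_lt_of_le one_pos (le_max_right _ _)
    intro x y hy
    rcases le_or_gt y 0 with hy0 | hy0
    · rw [max_eq_right hy0, (hf1 x).2, abs_zero]
      positivity
    · rw [max_eq_left hy0.le, abs_of_pos hy0]
      rcases lt_or_ge y δ with hlt | hge
      · have h5 := hf4' x y (ne_of_gt hy0) (by rwa [abs_of_pos hy0])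
        have h6 := (hf3 x y (ne_of_gt hy0)).1
        have h7 := (hf3 x y (ne_of_gt hy0)).2
        have hfpos : 0 < f x y := by nlinarith
        have h8 : f x y ≤ (lam1 μ W h - εl) * y := by
          rw [div_le_iff₀ hy0] at h5
          linarith
        rw [abs_of_pos hfpos]
        calc f x y ≤ (lam1 μ W h - εl) * y := h8
          _ ≤ K' * y := mul_le_mul_of_nonneg_right
              (le_trans (le_max_left _ _) (le_max_left _ _)) hy0.le
      · have h5 := hCR x y hy
        calc |f x y| ≤ CR := h5
          _ ≤ (CR/δ) * y := by
              rw [div_mul_eq_mul_div, le_div_iff₀ hδpos]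
              nlinarith
          _ ≤ K' * y := mul_le_mul_of_nonneg_right
              (le_trans (le_max_right _ _) (le_max_left _ _)) hy0.le
  -- summability and bound for the nonlinear pairing
  have fsum : ∀ (K : ℝ), 0 < K → ∀ (v w : V → ℝ), (∀ x, |f x (max (v x) 0)| ≤ K * |v x|) →
      Summable (fun x => v x^2 * μ x) → Summable (fun x => w x^2 * μ x) →
      ∀ t : ℝ, 0 < t →
      Summable (fun x => f x (max (v x) 0) * w x * μ x) ∧
      |∑' x, f x (max (v x) 0) * w x * μ x|
        ≤ K * (t/2 * ∑' x, v x^2 * μ x) + K * (1/(2*t) * ∑' x, w x^2 * μ x) := by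
    intro K hKpos v w hvR hv2 hw2 t ht
    have hterm : ∀ x, |f x (max (v x) 0) * w x * μ x|
        ≤ K * (t/2 * (v x^2 * μ x)) + K * (1/(2*t) * (w x^2 * μ x)) := by
      intro x
      have h1 : |f x (max (v x) 0) * w x * μ x| = |f x (max (v x) 0)| * |w x| * μ x := by
        rw [abs_mul, abs_mul, abs_of_nonneg (hμ x).le]
      rw [h1]
      have h2 : |f x (max (v x) 0)| * |w x| ≤ (K * |v x|) * |w x| :=
        mul_le_mul_of_nonneg_right (hvR x) (abs_nonneg _)
      have h3 : |v x| * |w x| ≤ t/2 * v x^2 + 1/(2*t) * w x^2 := by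
        have := young_abs_mul (a := v x) (b := w x) ht
        rwa [abs_mul] at this
      have h4 : (K * |v x|) * |w x| = K * (|v x| * |w x|) := by ring
      calc |f x (max (v x) 0)| * |w x| * μ x ≤ (K * |v x|) * |w x| * μ x :=
            mul_le_mul_of_nonneg_right h2 (hμ x).le
        _ = K * (|v x| * |w x|) * μ x := by rw [h4]
        _ ≤ K * (t/2 * v x^2 + 1/(2*t) * w x^2) * μ x := by
            apply mul_le_mul_of_nonneg_right _ (hμ x).le
            exact mul_le_mul_of_nonneg_left h3 hKpos.le
        _ = K * (t/2 * (v x^2 * μ x)) + K * (1/(2*t) * (w x^2 * μ x)) := by ring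
    have hsumrhs : Summable (fun x => K * (t/2 * (v x^2 * μ x)) + K * (1/(2*t) * (w x^2 * μ x))) :=
      ((hv2.mul_left _).mul_left _).add ((hw2.mul_left _).mul_left _)
    have hsum : Summable (fun x => f x (max (v x) 0) * w x * μ x) :=
      (Summable.of_nonneg_of_le (fun x => abs_nonneg _) hterm hsumrhs).of_abs
    refine ⟨hsum, ?_⟩
    calc |∑' x, f x (max (v x) 0) * w x * μ x|
        ≤ ∑' x, |f x (max (v x) 0) * w x * μ x| :=
          PSD.abs_tsum_le' (Summable.of_nonneg_of_le (fun x => abs_nonneg _) hterm hsumrhs)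
      _ ≤ ∑' x, (K * (t/2 * (v x^2 * μ x)) + K * (1/(2*t) * (w x^2 * μ x))) :=
          Summable.tsum_le_tsum hterm
            (Summable.of_nonneg_of_le (fun x => abs_nonneg _) hterm hsumrhs) hsumrhs
      _ = K * (t/2 * ∑' x, v x^2 * μ x) + K * (1/(2*t) * ∑' x, w x^2 * μ x) := by
          rw [Summable.tsum_add ((hv2.mul_left _).mul_left _) ((hw2.mul_left _).mul_left _)]
          rw [show (fun x => K * (t/2 * (v x^2 * μ x))) = fun x => (K * (t/2)) * (v x^2 * μ x) from
            funext fun x => by ring]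
          rw [show (fun x => K * (1/(2*t) * (w x^2 * μ x)))
            = fun x => (K * (1/(2*t))) * (w x^2 * μ x) from funext fun x => by ring]
          rw [tsum_mul_left, tsum_mul_left]
          ring
  -- STEP 1: boundedness
  have hE_le : ∀ n, D.E (u n) ≤ C^2 := by
    intro n
    have hsn : Summable (D.Et (u n)) := D.memHs_summable (hu n)
    have hEnnn : 0 ≤ D.E (u n) := D.E_nonneg _
    have hRnn : ∀ x, |u n x| ≤ Real.sqrt (D.E (u n) / (D.h0 * D.mu0)) :=
      fun x => D.abs_le_of_E_le hsn le_rfl x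
    have hRnpos : 0 < Real.sqrt (D.E (u n) / (D.h0 * D.mu0)) + 1 := by positivity
    obtain ⟨Kn, hKnpos, hKn⟩ := hfKgen _ hRnpos
    have hKn' : ∀ x, |f x (max (u n x) 0)| ≤ Kn * |u n x| :=
      fun x => hKn x (u n x) (le_trans (hRnn x) (by linarith))
    have hl2n : Summable (fun x => (u n x)^2 * μ x) := D.l2_summable hsn
    obtain ⟨hSfsum, -⟩ := fsum Kn hKnpos (u n) (u n) hKn' hl2n hl2n 1 one_pos
    have hFkey : ∀ x, 0 ≤ Fprim f x (max (u n x) 0) ∧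
        α * Fprim f x (max (u n x) 0) ≤ f x (max (u n x) 0) * u n x := by
      intro x
      rcases le_or_gt (u n x) 0 with hle | hlt
      · rw [max_eq_right hle]
        have hF0 : Fprim f x 0 = 0 := intervalIntegral.integral_same
        rw [hF0, (hf1 x).2]
        constructor
        · exact le_rfl
        · simp
      · rw [max_eq_left hlt.le]
        obtain ⟨h1, h2⟩ := hf3 x (u n x) (ne_of_gt hlt)
        refine ⟨by nlinarith, ?_⟩
        calc α * Fprim f x (u n x) ≤ u n x * f x (u n x) := h2
          _ = f x (u n x) * u n x := mul_comm _ _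
    have hFsum : Summable (fun x => Fprim f x (max (u n x) 0) * μ x) := by
      apply Summable.of_nonneg_of_le
        (fun x => mul_nonneg (hFkey x).1 (hμ x).le) (fun x => ?_) (hSfsum.mul_left (1/α))
      have h9 : α * (Fprim f x (max (u n x) 0) * μ x)
          ≤ f x (max (u n x) 0) * u n x * μ x := by
        have := mul_le_mul_of_nonneg_right (hFkey x).2 (hμ x).le
        nlinarith [this]
      have h10 : Fprim f x (max (u n x) 0) * μ x
          ≤ (f x (max (u n x) 0) * u n x * μ x) / α := (le_div_iff₀ hαpos).2 (by nlinarith [h9])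
      calc Fprim f x (max (u n x) 0) * μ x ≤ (f x (max (u n x) 0) * u n x * μ x) / α := h10
        _ = 1/α * (f x (max (u n x) 0) * u n x * μ x) := by ring
    set E' : ℝ := D.E (u n) with hE'
    set SF : ℝ := ∑' x, Fprim f x (max (u n x) 0) * μ x with hSFdef
    set Sf : ℝ := ∑' x, f x (max (u n x) 0) * u n x * μ x with hSfdef
    have hSFle : α * SF ≤ Sf := by
      rw [hSFdef, hSfdef, ← tsum_mul_left]
      apply Summable.tsum_le_tsum _ (hFsum.mul_left α) hSfsum
      intro x
      have := mul_le_mul_of_nonneg_right (hFkey x).2 (hμ x).le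
      nlinarith [this]
    have hJp : Jp μ W h f (u n) = (1/2) * E' - SF := D.Jp_eq f (u n)
    have hBtE : (∑' x, D.Bt (u n) (u n) x) = E' := by
      rw [hE']
      unfold PSD.E
      exact tsum_congr fun x => by unfold PSD.Bt PSD.Et; ring
    have hJD : JpDeriv μ W h f (u n) (u n) = E' - Sf := by
      rw [D.JpDeriv_eq f (u n) (u n), hBtE, hSfdef]
    have hEnn' : 0 ≤ E' := hEnnn
    have hs := Real.sqrt_nonneg E'
    set s : ℝ := Real.sqrt E' with hsdef
    have hs2 : s^2 = E' := Real.sq_sqrt hEnn'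
    have hsE : s = Real.sqrt (D.E (u n)) := by rw [hsdef, hE']
    clear_value E' SF Sf s
    have hJDb : |JpDeriv μ W h f (u n) (u n)| ≤ Cε * s := by
      calc |JpDeriv μ W h f (u n) (u n)| ≤ ε n * normHs μ W h (u n) := JD_bound n (u n) (hu n)
        _ = ε n * s := by rw [hsE, D.normHs_eq]
        _ ≤ Cε * s := mul_le_mul_of_nonneg_right (hCε n) hs
    have hα1 : 1/α ≤ 1 := by
      rw [div_le_one hαpos]
      linarith
    have hkey : β * E' ≤ Jp μ W h f (u n) - (1/α) * JpDeriv μ W h f (u n) (u n) := by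
      rw [hJp, hJD, hβdef]
      have h11 : SF ≤ (1/α) * Sf := by
        rw [(by ring : (1/α) * Sf = Sf / α), le_div_iff₀ hαpos]
        nlinarith [hSFle]
      nlinarith [h11]
    have hchain : β * E' ≤ CJ + Cε * s := by
      have h12 : Jp μ W h f (u n) ≤ CJ := le_trans (le_abs_self _) (hCJ n)
      have h14 : -(JpDeriv μ W h f (u n) (u n)) ≤ Cε * s := le_trans (neg_le_abs _) hJDb
      have hXnn : 0 ≤ Cε * s := mul_nonneg hCεnn hs
      have hA : (1/α) * (-(JpDeriv μ W h f (u n) (u n))) ≤ (1/α) * (Cε * s) :=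
        mul_le_mul_of_nonneg_left h14 (by positivity)
      have hB : (1/α) * (Cε * s) ≤ Cε * s := by
        have := mul_le_mul_of_nonneg_right hα1 hXnn
        simpa using this
      have hC1' : (1/α) * (-(JpDeriv μ W h f (u n) (u n))) ≤ Cε * s := le_trans hA hB
      have hrng : Jp μ W h f (u n) - (1/α) * JpDeriv μ W h f (u n) (u n)
          = Jp μ W h f (u n) + (1/α) * (-(JpDeriv μ W h f (u n) (u n))) := by ring
      rw [hrng] at hkey
      linarith [hkey, h12, hC1']
    have hsC : s ≤ C := by
      rcases le_or_gt s 1 with h' | h'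
      · exact le_trans h' hC1
      · have h16 : β * s^2 ≤ CJ + Cε * s := by rw [hs2]; exact hchain
        have h17 : β * s ≤ CJ + Cε := by
          have h18 : β * s * s ≤ (CJ + Cε) * s := by nlinarith [h16, h']
          exact le_of_mul_le_mul_right (by nlinarith [h18]) (lt_trans one_pos h')
        calc s ≤ (CJ + Cε)/β := by rw [le_div_iff₀ hβpos]; nlinarith [h17]
          _ ≤ C := hCge
    calc E' = s^2 := hs2.symm
      _ ≤ C^2 := by nlinarith [hsC, hs]
  -- uniform sup bound R and nonlinearity constant K
  set R : ℝ := Real.sqrt (C^2 / (D.h0 * D.mu0)) with hRdef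
  have hRpos : 0 < R := by
    rw [hRdef]
    apply Real.sqrt_pos.2
    have h1 : 0 < D.h0 * D.mu0 := mul_pos hh0 hμ0
    exact div_pos (by positivity) h1
  have hR : ∀ n x, |u n x| ≤ R := fun n x => by
    rw [hRdef]; exact D.abs_le_of_E_le (D.memHs_summable (hu n)) (hE_le n) x
  obtain ⟨K, hKpos, hfK⟩ := hfKgen R hRpos
  have hfKn : ∀ n x, |f x (max (u n x) 0)| ≤ K * |u n x| := fun n x => hfK x (u n x) (hR n x)
  clear_value R
  -- STEP 2: extraction of a pointwise convergent subsequence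
  have hcomp : IsCompact (Set.pi Set.univ (fun _ : V => Set.Icc (-R) R)) :=
    isCompact_univ_pi fun _ => isCompact_Icc
  have hmemK : ∀ n, u n ∈ Set.pi Set.univ (fun _ : V => Set.Icc (-R) R) := by
    intro n
    rw [Set.mem_univ_pi]
    intro x
    exact ⟨neg_le_of_abs_le (hR n x), le_of_abs_le (hR n x)⟩
  obtain ⟨u₀, hu₀K, φ, hφmono, hφten⟩ := hcomp.tendsto_subseq hmemK
  have hpt : ∀ x, Tendsto (fun k => u (φ k) x) atTop (𝓝 (u₀ x)) := fun x =>
    tendsto_pi_nhds.1 hφten x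
  -- Fatou for u₀
  have hvE : ∀ k, Summable (D.Et (u (φ k))) := fun k => D.memHs_summable (hu (φ k))
  have hvEle : ∀ k, D.E (u (φ k)) ≤ C^2 := fun k => hE_le (φ k)
  obtain ⟨hu₀sum, hu₀E⟩ := D.fatouE hvE hvEle hpt
  -- differences
  have hdsum : ∀ k, Summable (D.Et (fun x => u (φ k) x - u₀ x)) :=
    fun k => D.sumE_sub (hvE k) hu₀sum
  have hdE : ∀ k, D.E (fun x => u (φ k) x - u₀ x) ≤ 4 * C^2 := by
    intro k
    calc D.E (fun x => u (φ k) x - u₀ x) ≤ 2 * D.E (u (φ k)) + 2 * D.E u₀ :=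
          D.E_sub_le (hvE k) hu₀sum
      _ ≤ 4 * C^2 := by linarith [hvEle k, hu₀E]
  -- compact embedding : ℓ² convergence
  have hT : Tendsto (fun k => ∑' x, (u (φ k) x - u₀ x)^2 * μ x) atTop (𝓝 0) :=
    D.l2_conv hhcoer hdsum hdE hpt
  have hvl2 : ∀ k, Summable (fun x => (u (φ k) x)^2 * μ x) := fun k => D.l2_summable (hvE k)
  have hvl2b : ∀ k, ∑' x, (u (φ k) x)^2 * μ x ≤ C^2 / D.h0 := by
    intro k
    calc ∑' x, (u (φ k) x)^2 * μ x ≤ D.E (u (φ k)) / D.h0 := D.l2_tsum_le (hvE k)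
      _ ≤ C^2 / D.h0 := (div_le_div_iff_of_pos_right hh0).2 (hvEle k)
  have hdl2 : ∀ k, Summable (fun x => (u (φ k) x - u₀ x)^2 * μ x) :=
    fun k => D.l2_summable (hdsum k)
  -- STEP 3: Cauchy property in the energy
  have hεφ : Tendsto (fun k => ε (φ k)) atTop (𝓝 0) := hε0.comp hφmono.tendsto_atTop
  have hEcauchy : ∀ η : ℝ, 0 < η → ∃ N, ∀ k, N ≤ k → ∀ j, N ≤ j →
      D.E (fun x => u (φ k) x - u (φ j) x) ≤ η := by
    intro η hη
    set t : ℝ := η * D.h0 / (3 * K * (C^2 + 1)) with htdef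
    have h3K : (0:ℝ) < 3 * K * (C^2+1) := by positivity
    have htpos : 0 < t := by
      rw [htdef]
      exact div_pos (mul_pos hη hh0) h3K
    obtain ⟨N₁, hN₁⟩ := (Metric.tendsto_atTop.1 hεφ) (η / (12 * (C+1))) (by positivity)
    obtain ⟨N₂, hN₂⟩ := (Metric.tendsto_atTop.1 hT) (t * η / (24 * K)) (by positivity)
    refine ⟨max N₁ N₂, fun k hk j hj => ?_⟩
    have hεsmall : ∀ i, N₁ ≤ i → ε (φ i) ≤ η / (12 * (C+1)) := by
      intro i hi
      have hd := hN₁ i hi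
      rw [Real.dist_eq, sub_zero] at hd
      exact le_of_lt (lt_of_abs_lt hd)
    have hTsmall : ∀ i, N₂ ≤ i →
        ∑' x, (u (φ i) x - u₀ x)^2 * μ x ≤ t * η / (24 * K) := by
      intro i hi
      have hd := hN₂ i hi
      rw [Real.dist_eq, sub_zero] at hd
      exact le_of_lt (lt_of_abs_lt hd)
    have hk1 : N₁ ≤ k := le_trans (le_max_left _ _) hk
    have hk2 : N₂ ≤ k := le_trans (le_max_right _ _) hk
    have hj1 : N₁ ≤ j := le_trans (le_max_left _ _) hj
    have hj2 : N₂ ≤ j := le_trans (le_max_right _ _) hj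
    have hmemw : memHs μ W h (fun x => u (φ k) x - u (φ j) x) :=
      D.memHs_sub (hu (φ k)) (hu (φ j))
    have hsw : Summable (D.Et (fun x => u (φ k) x - u (φ j) x)) := D.memHs_summable hmemw
    have hEw4 : D.E (fun x => u (φ k) x - u (φ j) x) ≤ 4 * C^2 := by
      calc D.E (fun x => u (φ k) x - u (φ j) x)
          ≤ 2 * D.E (u (φ k)) + 2 * D.E (u (φ j)) := D.E_sub_le (hvE k) (hvE j)
        _ ≤ 4 * C^2 := by linarith [hvEle k, hvEle j]
    have hnw : normHs μ W h (fun x => u (φ k) x - u (φ j) x) ≤ 2*C := by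
      rw [D.normHs_eq]
      calc Real.sqrt (D.E (fun x => u (φ k) x - u (φ j) x))
          ≤ Real.sqrt (4*C^2) := Real.sqrt_le_sqrt hEw4
        _ = 2*C := by
            rw [show (4:ℝ)*C^2 = (2*C)^2 by ring, Real.sqrt_sq (by positivity)]
    have hJDbnd : ∀ i, N₁ ≤ i →
        |JpDeriv μ W h f (u (φ i)) (fun x => u (φ k) x - u (φ j) x)| ≤ η/6 := by
      intro i hi
      calc |JpDeriv μ W h f (u (φ i)) (fun x => u (φ k) x - u (φ j) x)|
          ≤ ε (φ i) * normHs μ W h (fun x => u (φ k) x - u (φ j) x) :=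
            JD_bound (φ i) _ hmemw
        _ ≤ (η / (12*(C+1))) * (2*C) := by
            apply mul_le_mul (hεsmall i hi) hnw (D.normHs_nonneg _) (by positivity)
        _ ≤ η/6 := by
            rw [div_mul_eq_mul_div, div_le_div_iff₀ (by positivity) (by norm_num)]
            nlinarith [hη.le, hCpos.le]
    -- ℓ² bound for the difference
    have hwl2 : Summable (fun x => (u (φ k) x - u (φ j) x)^2 * μ x) := D.l2_summable hsw
    have hw2b : ∑' x, (u (φ k) x - u (φ j) x)^2 * μ x
        ≤ 2 * (∑' x, (u (φ k) x - u₀ x)^2 * μ x)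
          + 2 * (∑' x, (u (φ j) x - u₀ x)^2 * μ x) := by
      have hterm : ∀ x, (u (φ k) x - u (φ j) x)^2 * μ x
          ≤ 2*((u (φ k) x - u₀ x)^2 * μ x) + 2*((u (φ j) x - u₀ x)^2 * μ x) := by
        intro x
        nlinarith [mul_nonneg (sq_nonneg ((u (φ k) x - u₀ x) + (u (φ j) x - u₀ x))) (hμ x).le]
      calc ∑' x, (u (φ k) x - u (φ j) x)^2 * μ x
          ≤ ∑' x, (2*((u (φ k) x - u₀ x)^2 * μ x) + 2*((u (φ j) x - u₀ x)^2 * μ x)) :=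
            Summable.tsum_le_tsum hterm hwl2 (((hdl2 k).mul_left 2).add ((hdl2 j).mul_left 2))
        _ = 2 * (∑' x, (u (φ k) x - u₀ x)^2 * μ x)
            + 2 * (∑' x, (u (φ j) x - u₀ x)^2 * μ x) := by
            rw [Summable.tsum_add ((hdl2 k).mul_left 2) ((hdl2 j).mul_left 2),
              tsum_mul_left, tsum_mul_left]
    have hw2small : ∑' x, (u (φ k) x - u (φ j) x)^2 * μ x ≤ t*η/(6*K) := by
      have h1 := hTsmall k hk2
      have h2 := hTsmall j hj2
      have h3 : (4:ℝ) * (t*η/(24*K)) = t*η/(6*K) := by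
        field_simp
        ring
      linarith [hw2b]
    have hfbnd : ∀ i, N₂ ≤ i → ∀ hl2i : Summable (fun x => (u (φ i) x)^2 * μ x),
        |∑' x, f x (max (u (φ i) x) 0) * (u (φ k) x - u (φ j) x) * μ x| ≤ η/6 + η/12 := by
      intro i _ hl2i
      obtain ⟨-, hfb⟩ := fsum K hKpos (u (φ i)) (fun x => u (φ k) x - u (φ j) x)
        (fun x => hfKn (φ i) x) hl2i hwl2 t htpos
      have e1 : K * (t/2 * (C^2/D.h0)) = η * C^2/(6*(C^2+1)) := by
        rw [htdef]
        have hh0ne : D.h0 ≠ 0 := D.hh0.ne'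
        field_simp
        ring
      have e2 : K * (1/(2*t) * (t*η/(6*K))) = η/12 := by
        field_simp
        ring
      have e3 : η * C^2/(6*(C^2+1)) ≤ η/6 := by
        rw [div_le_div_iff₀ (by positivity) (by norm_num)]
        nlinarith [hη.le, sq_nonneg C]
      calc |∑' x, f x (max (u (φ i) x) 0) * (u (φ k) x - u (φ j) x) * μ x|
          ≤ K * (t/2 * ∑' x, (u (φ i) x)^2 * μ x)
            + K * (1/(2*t) * ∑' x, (u (φ k) x - u (φ j) x)^2 * μ x) := hfb
        _ ≤ K * (t/2 * (C^2/D.h0)) + K * (1/(2*t) * (t*η/(6*K))) := by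
            apply add_le_add
            · apply mul_le_mul_of_nonneg_left _ hKpos.le
              apply mul_le_mul_of_nonneg_left _ (by positivity)
              exact hvl2b i
            · apply mul_le_mul_of_nonneg_left _ hKpos.le
              apply mul_le_mul_of_nonneg_left _ (by positivity)
              exact hw2small
        _ = η * C^2/(6*(C^2+1)) + η/12 := by rw [e1, e2]
        _ ≤ η/6 + η/12 := by linarith [e3]
    have hexp := D.E_expansion (hvE k) (hvE j)
    have hBt_k : (∑' x, D.Bt (u (φ k)) (fun z => u (φ k) z - u (φ j) z) x)
        = JpDeriv μ W h f (u (φ k)) (fun z => u (φ k) z - u (φ j) z)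
          + ∑' x, f x (max (u (φ k) x) 0) * (u (φ k) x - u (φ j) x) * μ x := by
      rw [D.JpDeriv_eq]
      ring
    have hBt_j : (∑' x, D.Bt (u (φ j)) (fun z => u (φ k) z - u (φ j) z) x)
        = JpDeriv μ W h f (u (φ j)) (fun z => u (φ k) z - u (φ j) z)
          + ∑' x, f x (max (u (φ j) x) 0) * (u (φ k) x - u (φ j) x) * μ x := by
      rw [D.JpDeriv_eq]
      ring
    have hfk6 := hfbnd k hk2 (hvl2 k)
    have hfj6 := hfbnd j hj2 (hvl2 j)
    have hJDk := hJDbnd k hk1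
    have hJDj := hJDbnd j hj1
    rw [hexp, hBt_k, hBt_j]
    have a1 := le_abs_self (JpDeriv μ W h f (u (φ k)) (fun z => u (φ k) z - u (φ j) z))
    have a2 := neg_le_abs (JpDeriv μ W h f (u (φ j)) (fun z => u (φ k) z - u (φ j) z))
    have a3 := le_abs_self (∑' x, f x (max (u (φ k) x) 0) * (u (φ k) x - u (φ j) x) * μ x)
    have a4 := neg_le_abs (∑' x, f x (max (u (φ j) x) 0) * (u (φ k) x - u (φ j) x) * μ x)
    linarith [a1, a2, a3, a4, hJDk, hJDj, hfk6, hfj6]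
  -- STEP 4: convergence to u₀ in energy
  have hconv : ∀ η : ℝ, 0 < η → ∃ N, ∀ k, N ≤ k →
      D.E (fun x => u (φ k) x - u₀ x) ≤ η := by
    intro η hη
    obtain ⟨N, hN⟩ := hEcauchy η hη
    refine ⟨N, fun k hk => ?_⟩
    exact (D.fatouE (w := fun j => fun x => u (φ k) x - u (φ (j + N)) x)
      (winf := fun x => u (φ k) x - u₀ x) (C2 := η)
      (fun j => D.sumE_sub (hvE k) (hvE (j + N)))
      (fun j => hN k hk (j + N) (Nat.le_add_left N j))
      (fun x => tendsto_const_nhds.sub ((hpt x).comp (tendsto_add_atTop_nat N)))).2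
  have hEconv : Tendsto (fun k => D.E (fun x => u (φ k) x - u₀ x)) atTop (𝓝 0) := by
    rw [Metric.tendsto_atTop]
    intro η hη
    obtain ⟨N, hN⟩ := hconv (η/2) (by positivity)
    refine ⟨N, fun n hn => ?_⟩
    rw [Real.dist_eq, sub_zero, abs_of_nonneg (D.E_nonneg _)]
    linarith [hN n hn]
  have hnormconv : Tendsto (fun n => normHs μ W h (fun x => u (φ n) x - u₀ x)) atTop (𝓝 0) := by
    have h1 := hEconv.sqrt
    rw [Real.sqrt_zero] at h1
    exact h1
  -- memHs u₀
  have happrox : ∀ k : ℕ, ∃ a : V → ℝ, (Function.support a).Finite ∧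
      normHs μ W h (fun x => a x - u (φ k) x) ≤ 1/(k+1) := by
    intro k
    obtain ⟨hsum', b, hbfin, hbten⟩ := hu (φ k)
    obtain ⟨m, hm⟩ := (Metric.tendsto_atTop.1 hbten) (1/(k+1)) (by positivity)
    refine ⟨b m, hbfin m, ?_⟩
    have hmm := hm m le_rfl
    rw [Real.dist_eq, sub_zero] at hmm
    exact le_of_lt (lt_of_abs_lt hmm)
  choose a hafin haclose using happrox
  have hmemu₀ : memHs μ W h u₀ := by
    refine ⟨hu₀sum, a, hafin, ?_⟩
    refine squeeze_zero (f := fun k : ℕ => normHs μ W h (fun x => a k x - u₀ x))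
      (g := fun k : ℕ => Real.sqrt (2 * (1/(k+1:ℝ))^2 + 2 * D.E (fun x => u (φ k) x - u₀ x)))
      (fun k => D.normHs_nonneg _) (fun k => ?_) ?_
    · beta_reduce
      rw [hnormE]
      apply Real.sqrt_le_sqrt
      have hsak : Summable (D.Et (fun x => a k x - u (φ k) x)) :=
        D.sumE_sub (D.sumE_of_finite_support (hafin k)) (hvE k)
      have h1 : D.E (fun x => a k x - u (φ k) x) ≤ (1/(k+1:ℝ))^2 := by
        have h2 := haclose k
        have h3 := D.normHs_nonneg (fun x => a k x - u (φ k) x)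
        have h4 := D.sq_normHs (fun x => a k x - u (φ k) x)
        nlinarith [h2, h3, h4]
      calc D.E (fun x => a k x - u₀ x)
          = D.E (fun x => (a k x - u (φ k) x) + (u (φ k) x - u₀ x)) := by
            rw [show (fun x => a k x - u₀ x)
              = (fun x => (a k x - u (φ k) x) + (u (φ k) x - u₀ x)) from
              funext fun x => by ring]
        _ ≤ 2 * D.E (fun x => a k x - u (φ k) x)
            + 2 * D.E (fun x => u (φ k) x - u₀ x) := D.E_add_le hsak (hdsum k)
        _ ≤ 2 * (1/(k+1:ℝ))^2 + 2 * D.E (fun x => u (φ k) x - u₀ x) := by linarith [h1]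
    · have h6 : Tendsto (fun k : ℕ => (1:ℝ)/(k+1)) atTop (𝓝 0) :=
        tendsto_one_div_add_atTop_nhds_zero_nat
      have h5 : Tendsto (fun k : ℕ => 2 * (1/(k+1:ℝ))^2
          + 2 * D.E (fun x => u (φ k) x - u₀ x)) atTop (𝓝 0) := by
        have h7 := ((h6.pow 2).const_mul (2:ℝ)).add (hEconv.const_mul (2:ℝ))
        simpa using h7
      simpa using h5.sqrt
  exact ⟨φ, hφmono, u₀, hmemu₀, hnormconv⟩
end

section
/- Assume μ₀ := inf_{x∈V} μ(x) > 0 and that f satisfies (F1)–(F5). If u ∈ H_s with u⁺ ≢ 0, then there exists a unique t₀ > 0 such that t₀u ∈ N_+, and J_+(t₀u) = max_{t>0} J_+(tu). Moreover, if u ∈ N_+ then J_+(u) = max_{t>0} J_+(tu). -/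
open Filter Topology

/-- The Nehari manifold `N_+ = { u ∈ H_s : u ≢ 0, ‖u‖²_{H_s} = ∫_V f(x,u⁺) u⁺ dμ }`. -/
def NehP {V : Type*} (μ : V → ℝ) (W : V → V → ℝ) (h : V → ℝ) (f : V → ℝ → ℝ)
    (u : V → ℝ) : Prop :=
  memHs μ W h u ∧ u ≠ 0 ∧
    (∑' x, (gradPair μ W u u x + h x * (u x) ^ 2) * μ x)
      = ∑' x, f x (max (u x) 0) * max (u x) 0 * μ x

section aux
variable {V : Type*}

lemma real_iInf_le {g : V → ℝ} (hg : 0 < ⨅ x, g x) (x : V) : (⨅ y, g y) ≤ g x := by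
  by_cases hb : BddBelow (Set.range g)
  · exact ciInf_le hb x
  · rw [Real.iInf_of_not_bddBelow hb] at hg; exact absurd hg (lt_irrefl 0)

lemma grad_self_nonneg (μ : V → ℝ) (W : V → V → ℝ) (hμ : ∀ x, 0 < μ x)
    (hW : ∀ x y, 0 ≤ W x y) (u : V → ℝ) (x : V) : 0 ≤ gradPair μ W u u x := by
  apply mul_nonneg (one_div_nonneg.mpr (by linarith [hμ x]))
  apply tsum_nonneg
  intro y
  have := mul_nonneg (hW x y) (mul_self_nonneg (u x - u y))
  nlinarith

lemma grad_smul (μ : V → ℝ) (W : V → V → ℝ) (t : ℝ) (u : V → ℝ) (x : V) :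
    gradPair μ W (fun z => t * u z) (fun z => t * u z) x = t ^ 2 * gradPair μ W u u x := by
  have h1 : ∑' y, W x y * (t * u x - t * u y) * (t * u x - t * u y)
      = t ^ 2 * ∑' y, W x y * (u x - u y) * (u x - u y) := by
    rw [← tsum_mul_left]; exact tsum_congr fun y => by ring
  simp only [gradPair]
  rw [h1]; ring

lemma integrand_smul (μ : V → ℝ) (W : V → V → ℝ) (h : V → ℝ) (t : ℝ) (u : V → ℝ) (x : V) :
    (gradPair μ W (fun z => t * u z) (fun z => t * u z) x + h x * (t * u x) ^ 2) * μ x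
      = t ^ 2 * ((gradPair μ W u u x + h x * (u x) ^ 2) * μ x) := by
  rw [grad_smul]; ring

lemma tsum_integrand_smul (μ : V → ℝ) (W : V → V → ℝ) (h : V → ℝ) (t : ℝ) (u : V → ℝ) :
    ∑' x, (gradPair μ W (fun z => t * u z) (fun z => t * u z) x + h x * (t * u x) ^ 2) * μ x
      = t ^ 2 * ∑' x, (gradPair μ W u u x + h x * (u x) ^ 2) * μ x := by
  rw [← tsum_mul_left]; exact tsum_congr fun x => integrand_smul μ W h t u x

lemma normHs_smul (μ : V → ℝ) (W : V → V → ℝ) (h : V → ℝ) (t : ℝ) (u : V → ℝ) :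
    normHs μ W h (fun x => t * u x) = |t| * normHs μ W h u := by
  unfold normHs
  rw [tsum_integrand_smul, Real.sqrt_mul (sq_nonneg t), Real.sqrt_sq_eq_abs]

lemma memHs_smul {μ : V → ℝ} {W : V → V → ℝ} {h : V → ℝ} (t : ℝ) {u : V → ℝ}
    (hu : memHs μ W h u) : memHs μ W h (fun x => t * u x) := by
  obtain ⟨hs, uk, hfin, htend⟩ := hu
  constructor
  · exact ((hs.mul_left (t ^ 2)).congr fun x => (integrand_smul μ W h t u x).symm)
  · refine ⟨fun k x => t * uk k x, fun k => (hfin k).subset ?_, ?_⟩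
    · intro x hx
      simp only [Function.mem_support] at hx ⊢
      exact fun h0 => hx (by rw [h0, mul_zero])
    · have heq : ∀ k, normHs μ W h (fun x => t * uk k x - t * u x)
          = |t| * normHs μ W h (fun x => uk k x - u x) := by
        intro k
        rw [show (fun x => t * uk k x - t * u x) = fun x => t * (uk k x - u x) from
          funext fun x => by ring, normHs_smul]
      simp only [heq]
      have := htend.const_mul |t|
      simpa using this

end aux

section scalar
variable {V : Type*}

lemma Fprim_zero (f : V → ℝ → ℝ) (x : V) : Fprim f x 0 = 0 :=
  intervalIntegral.integral_same

lemma f_pos {f : V → ℝ → ℝ} {α : ℝ}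
    (hf3 : ∀ x, ∀ y : ℝ, y ≠ 0 → 0 < α * Fprim f x y ∧ α * Fprim f x y ≤ y * f x y)
    {x : V} {y : ℝ} (hy : 0 < y) : 0 < f x y := by
  obtain ⟨h1, h2⟩ := hf3 x y (ne_of_gt hy)
  nlinarith

lemma f_nonneg {f : V → ℝ → ℝ} {α : ℝ}
    (hf1 : ∀ x, Continuous (f x) ∧ f x 0 = 0)
    (hf3 : ∀ x, ∀ y : ℝ, y ≠ 0 → 0 < α * Fprim f x y ∧ α * Fprim f x y ≤ y * f x y)
    {x : V} {y : ℝ} (hy : 0 ≤ y) : 0 ≤ f x y := by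
  rcases hy.eq_or_lt with h | h
  · rw [← h, (hf1 x).2]
  · exact (f_pos hf3 h).le

lemma Fprim_pos {f : V → ℝ → ℝ} {α : ℝ} (hα : 2 < α)
    (hf3 : ∀ x, ∀ y : ℝ, y ≠ 0 → 0 < α * Fprim f x y ∧ α * Fprim f x y ≤ y * f x y)
    {x : V} {y : ℝ} (hy : 0 < y) : 0 < Fprim f x y := by
  have := (hf3 x y (ne_of_gt hy)).1
  nlinarith

lemma Fprim_nonneg {f : V → ℝ → ℝ} {α : ℝ} (hα : 2 < α)
    (hf3 : ∀ x, ∀ y : ℝ, y ≠ 0 → 0 < α * Fprim f x y ∧ α * Fprim f x y ≤ y * f x y)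
    {x : V} {y : ℝ} (hy : 0 ≤ y) : 0 ≤ Fprim f x y := by
  rcases hy.eq_or_lt with h | h
  · rw [← h, Fprim_zero]
  · exact (Fprim_pos hα hf3 h).le

/-- non-strict monotonicity of `z ↦ f x z / z` on positive reals. -/
lemma f_div_mono {f : V → ℝ → ℝ}
    (hf5 : ∀ x, StrictMonoOn (fun y : ℝ => f x y / |y|) (Set.Iio (0:ℝ)) ∧
      StrictMonoOn (fun y : ℝ => f x y / |y|) (Set.Ioi (0:ℝ)))
    (x : V) {a b : ℝ} (ha : 0 < a) (hab : a ≤ b) : f x a / a ≤ f x b / b := by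
  rcases hab.eq_or_lt with h | h
  · rw [h]
  · have hb : 0 < b := lt_trans ha h
    have := ((hf5 x).2 (Set.mem_Ioi.mpr ha) (Set.mem_Ioi.mpr hb) h).le
    simpa [abs_of_pos ha, abs_of_pos hb] using this

lemma f_div_strict {f : V → ℝ → ℝ}
    (hf5 : ∀ x, StrictMonoOn (fun y : ℝ => f x y / |y|) (Set.Iio (0:ℝ)) ∧
      StrictMonoOn (fun y : ℝ => f x y / |y|) (Set.Ioi (0:ℝ)))
    (x : V) {a b : ℝ} (ha : 0 < a) (hab : a < b) : f x a / a < f x b / b := by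
  have hb : 0 < b := lt_trans ha hab
  have := (hf5 x).2 (Set.mem_Ioi.mpr ha) (Set.mem_Ioi.mpr hb) hab
  simpa [abs_of_pos ha, abs_of_pos hb] using this

/-- Key pointwise inequality: `F(x,ty) − F(x,y) ≥ (t²−1)/2 · f(x,y)·y` for `t>0`, `y≥0`. -/
lemma key_ineq {f : V → ℝ → ℝ}
    (hf1 : ∀ x, Continuous (f x) ∧ f x 0 = 0)
    (hf5 : ∀ x, StrictMonoOn (fun y : ℝ => f x y / |y|) (Set.Iio (0:ℝ)) ∧
      StrictMonoOn (fun y : ℝ => f x y / |y|) (Set.Ioi (0:ℝ)))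
    (x : V) {t y : ℝ} (ht : 0 < t) (hy : 0 ≤ y) :
    (t ^ 2 - 1) / 2 * (f x y * y) ≤ Fprim f x (t * y) - Fprim f x y := by
  rcases hy.eq_or_lt with h | hy
  · rw [← h]; simp [Fprim_zero]
  set c := f x y / y with hc
  have hfc : f x y = c * y := by rw [hc, div_mul_cancel₀ _ hy.ne']
  have hint : ∀ a b : ℝ, IntervalIntegrable (f x) MeasureTheory.volume a b :=
    fun a b => (hf1 x).1.intervalIntegrable a b
  have hintc : ∀ a b : ℝ, IntervalIntegrable (fun z => c * z) MeasureTheory.volume a b :=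
    fun a b => (continuous_const.mul continuous_id).intervalIntegrable a b
  have hsub : Fprim f x (t * y) - Fprim f x y = ∫ z in y..(t*y), f x z := by
    rw [Fprim, Fprim]
    exact intervalIntegral.integral_interval_sub_left (hint 0 (t*y)) (hint 0 y)
  have hcz : ∫ z in y..(t*y), c * z = (t ^ 2 - 1) / 2 * (f x y * y) := by
    rw [intervalIntegral.integral_const_mul, integral_id, hfc]
    field_simp
  rw [hsub, ← hcz]
  rcases le_or_gt y (t * y) with hle | hlt
  · apply intervalIntegral.integral_mono_on hle (hintc y (t*y)) (hint y (t*y))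
    intro z hz
    have hz1 : y ≤ z := hz.1
    have hzpos : 0 < z := lt_of_lt_of_le hy hz1
    have := f_div_mono hf5 x hy hz1
    rw [div_le_div_iff₀ hy hzpos] at this
    calc c * z = f x y / y * z := rfl
      _ ≤ f x z := by rw [div_mul_eq_mul_div, div_le_iff₀ hy]; nlinarith
  · have e1 : (∫ z in y..(t*y), c * z) = - ∫ z in (t*y)..y, c * z :=
      intervalIntegral.integral_symm (t*y) y
    have e2 : (∫ z in y..(t*y), f x z) = - ∫ z in (t*y)..y, f x z :=
      intervalIntegral.integral_symm (t*y) y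
    rw [e1, e2]
    apply neg_le_neg
    apply intervalIntegral.integral_mono_on hlt.le (hint (t*y) y) (hintc (t*y) y)
    intro z hz
    have htp : 0 < t * y := mul_pos ht hy
    have hzpos : 0 < z := lt_of_lt_of_le htp hz.1
    have := f_div_mono hf5 x hzpos hz.2
    rw [div_le_div_iff₀ hzpos hy] at this
    calc f x z ≤ f x y / y * z := by rw [div_mul_eq_mul_div, le_div_iff₀ hy]; nlinarith
      _ = c * z := rfl

end scalar

section summability
variable {V : Type*} [Countable V]

omit [Countable V] in
lemma finite_large {w μ : V → ℝ} {μ0 : ℝ} (hμ0 : 0 < μ0) (hμ : ∀ x, μ0 ≤ μ x)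
    (hw : ∀ x, 0 ≤ w x) (hsum2 : Summable fun x => w x ^ 2 * μ x)
    {c : ℝ} (hc : 0 < c) : {x : V | c ≤ w x}.Finite := by
  have hten := hsum2.tendsto_cofinite_zero
  have hev : ∀ᶠ x in cofinite, w x ^ 2 * μ x < c ^ 2 * μ0 :=
    hten (gt_mem_nhds (by positivity))
  apply (Filter.eventually_cofinite.mp hev).subset
  intro x hx
  simp only [Set.mem_setOf_eq, not_lt]
  have hcx : c ≤ w x := hx
  have h1 : c ^ 2 ≤ w x ^ 2 := by nlinarith [hw x]
  nlinarith [hμ x, hw x]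

set_option maxHeartbeats 1000000 in
/-- Summability of the nonlinear terms. -/
lemma summable_terms {w μ : V → ℝ} {μ0 : ℝ} (hμ0 : 0 < μ0) (hμl : ∀ x, μ0 ≤ μ x)
    (hμ : ∀ x, 0 < μ x)
    (hw : ∀ x, 0 ≤ w x) {B : ℝ} (hB : 0 < B) (hwB : ∀ x, w x ≤ B)
    (hsum2 : Summable fun x => w x ^ 2 * μ x)
    {f : V → ℝ → ℝ} {α : ℝ} (hα : 2 < α)
    (hf1 : ∀ x, Continuous (f x) ∧ f x 0 = 0)
    (hf2 : ∀ M : ℝ, 0 < M → ∃ C : ℝ, ∀ x, ∀ y : ℝ, |y| ≤ M → |f x y| ≤ C)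
    (hf3 : ∀ x, ∀ y : ℝ, y ≠ 0 → 0 < α * Fprim f x y ∧ α * Fprim f x y ≤ y * f x y)
    {K δ : ℝ} (hδ : 0 < δ) (hK : ∀ x, ∀ y : ℝ, 0 < y → y < δ → f x y ≤ K * y)
    {t : ℝ} (ht : 0 < t) :
    Summable (fun x => f x (t * w x) * w x * μ x) ∧
      Summable (fun x => Fprim f x (t * w x) * μ x) := by
  have hαpos : (0:ℝ) < α := by linarith
  obtain ⟨C₀, hC₀⟩ := hf2 (t * B) (by positivity)
  set C := max C₀ 0 with hCdef
  have hC : ∀ x (y : ℝ), |y| ≤ t * B → |f x y| ≤ C := fun x y hy =>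
    (hC₀ x y hy).trans (le_max_left _ _)
  have hCpos : 0 ≤ C := le_max_right _ _
  set K' := max K 0 with hK'def
  have hK'pos : 0 ≤ K' := le_max_right _ _
  have hK' : ∀ x, ∀ y : ℝ, 0 < y → y < δ → f x y ≤ K' * y := by
    intro x y h1 h2
    exact (hK x y h1 h2).trans (by nlinarith [le_max_left K 0])
  set S : Set V := {x : V | δ / t ≤ w x} with hSdef
  have hfin : S.Finite := finite_large hμ0 hμl hw hsum2 (by positivity)
  have hboundarg : ∀ x, |t * w x| ≤ t * B := by
    intro x
    rw [abs_of_nonneg (mul_nonneg ht.le (hw x))]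
    exact mul_le_mul_of_nonneg_left (hwB x) ht.le
  have hcase : ∀ x, x ∉ S → w x ≠ 0 → 0 < t * w x ∧ t * w x < δ := by
    intro x hxS hx0
    have hwx : 0 < w x := lt_of_le_of_ne (hw x) (Ne.symm hx0)
    refine ⟨mul_pos ht hwx, ?_⟩
    simp only [hSdef, Set.mem_setOf_eq, not_le] at hxS
    rw [← lt_div_iff₀' ht]
    exact hxS
  constructor
  · apply Summable.of_nonneg_of_le
      (g := fun x => f x (t * w x) * w x * μ x)
      (f := fun x => S.indicator (fun x => C * (w x * μ x)) x + K' * t * (w x ^ 2 * μ x))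
    · intro x
      have hfn : 0 ≤ f x (t * w x) := f_nonneg hf1 hf3 (mul_nonneg ht.le (hw x))
      exact mul_nonneg (mul_nonneg hfn (hw x)) (hμ x).le
    · intro x
      have hind : 0 ≤ S.indicator (fun x => C * (w x * μ x)) x :=
        Set.indicator_nonneg (fun y _ =>
          mul_nonneg hCpos (mul_nonneg (hw y) (hμ y).le)) x
      have h3 : 0 ≤ K' * t * (w x ^ 2 * μ x) :=
        mul_nonneg (mul_nonneg hK'pos ht.le) (mul_nonneg (sq_nonneg _) (hμ x).le)
      by_cases hxS : x ∈ S
      · rw [Set.indicator_of_mem hxS]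
        have h1 : f x (t * w x) ≤ C := (le_abs_self _).trans (hC x _ (hboundarg x))
        have h2 : f x (t * w x) * w x * μ x ≤ C * (w x * μ x) := by
          rw [mul_assoc]
          exact mul_le_mul_of_nonneg_right h1 (mul_nonneg (hw x) (hμ x).le)
        linarith
      · rw [Set.indicator_of_notMem hxS]
        by_cases hx0 : w x = 0
        · simp [hx0, (hf1 x).2]
        · obtain ⟨hpos, hlt⟩ := hcase x hxS hx0
          have h1 : f x (t * w x) ≤ K' * (t * w x) := hK' x _ hpos hlt
          have h2 : f x (t * w x) * w x * μ x ≤ K' * (t * w x) * w x * μ x :=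
            mul_le_mul_of_nonneg_right
              (mul_le_mul_of_nonneg_right h1 (hw x)) (hμ x).le
          have h4 : K' * (t * w x) * w x * μ x = K' * t * (w x ^ 2 * μ x) := by ring
          linarith
    · apply Summable.add
      · apply summable_of_ne_finset_zero (s := hfin.toFinset)
        intro x hx
        rw [Set.Finite.mem_toFinset] at hx
        exact Set.indicator_of_notMem hx _
      · exact hsum2.mul_left (K' * t)
  · apply Summable.of_nonneg_of_le
      (g := fun x => Fprim f x (t * w x) * μ x)
      (f := fun x => S.indicator (fun x => (t * B * C / α) * μ x) x
        + (K' * t ^ 2 / α) * (w x ^ 2 * μ x))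
    · intro x
      exact mul_nonneg (Fprim_nonneg hα hf3 (mul_nonneg ht.le (hw x))) (hμ x).le
    · intro x
      have hind : 0 ≤ S.indicator (fun x => (t * B * C / α) * μ x) x :=
        Set.indicator_nonneg (fun y _ =>
          mul_nonneg (by positivity) (hμ y).le) x
      have h3 : 0 ≤ (K' * t ^ 2 / α) * (w x ^ 2 * μ x) :=
        mul_nonneg (by positivity) (mul_nonneg (sq_nonneg _) (hμ x).le)
      by_cases hx0 : w x = 0
      · simp only [hx0, mul_zero, Fprim_zero, zero_mul]
        linarith
      · have hwx : 0 < w x := lt_of_le_of_ne (hw x) (Ne.symm hx0)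
        have hargpos : 0 < t * w x := mul_pos ht hwx
        have hfn : 0 ≤ f x (t * w x) := f_nonneg hf1 hf3 hargpos.le
        have h3' := (hf3 x (t * w x) (ne_of_gt hargpos)).2
        have hFb : Fprim f x (t * w x) ≤ (t * w x) * f x (t * w x) / α := by
          rw [le_div_iff₀ hαpos]; linarith
        by_cases hxS : x ∈ S
        · rw [Set.indicator_of_mem hxS]
          have h1 : f x (t * w x) ≤ C := (le_abs_self _).trans (hC x _ (hboundarg x))
          have e1 : (t * w x) * f x (t * w x) ≤ (t * w x) * C :=
            mul_le_mul_of_nonneg_left h1 (mul_nonneg ht.le (hw x))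
          have e2 : (t * w x) * C ≤ (t * B) * C :=
            mul_le_mul_of_nonneg_right
              (mul_le_mul_of_nonneg_left (hwB x) ht.le) hCpos
          have h2 : Fprim f x (t * w x) ≤ t * B * C / α :=
            hFb.trans ((div_le_div_iff_of_pos_right hαpos).mpr (by linarith))
          have h5 : Fprim f x (t * w x) * μ x ≤ (t * B * C / α) * μ x :=
            mul_le_mul_of_nonneg_right h2 (hμ x).le
          linarith
        · rw [Set.indicator_of_notMem hxS]
          obtain ⟨hpos, hlt⟩ := hcase x hxS hx0
          have h1 : f x (t * w x) ≤ K' * (t * w x) := hK' x _ hpos hlt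
          have e1 : (t * w x) * f x (t * w x) ≤ (t * w x) * (K' * (t * w x)) :=
            mul_le_mul_of_nonneg_left h1 hargpos.le
          have e2 : (t * w x) * (K' * (t * w x)) = K' * t ^ 2 * w x ^ 2 := by ring
          have h2 : Fprim f x (t * w x) ≤ K' * t ^ 2 * w x ^ 2 / α :=
            hFb.trans ((div_le_div_iff_of_pos_right hαpos).mpr (by linarith))
          have h5 : Fprim f x (t * w x) * μ x ≤ (K' * t ^ 2 * w x ^ 2 / α) * μ x :=
            mul_le_mul_of_nonneg_right h2 (hμ x).le
          have h6 : (K' * t ^ 2 * w x ^ 2 / α) * μ x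
              = (K' * t ^ 2 / α) * (w x ^ 2 * μ x) := by ring
          linarith
    · apply Summable.add
      · apply summable_of_ne_finset_zero (s := hfin.toFinset)
        intro x hx
        rw [Set.Finite.mem_toFinset] at hx
        exact Set.indicator_of_notMem hx _
      · exact hsum2.mul_left (K' * t ^ 2 / α)

end summability

section maxlemma
variable {V : Type*} [Countable V]

omit [Countable V] in
lemma max_smul (t z : ℝ) (ht : 0 ≤ t) : max (t * z) 0 = t * max z 0 := by
  rcases le_total z 0 with hz | hz
  · rw [max_eq_right (by nlinarith), max_eq_right hz, mul_zero]
  · rw [max_eq_left (by nlinarith), max_eq_left hz]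

omit [Countable V] in
lemma Jp_smul_eval (μ : V → ℝ) (W : V → V → ℝ) (h : V → ℝ) (f : V → ℝ → ℝ)
    (u : V → ℝ) {t : ℝ} (ht : 0 < t) :
    Jp μ W h f (fun x => t * u x)
      = (1 / 2) * (t ^ 2 * ∑' x, (gradPair μ W u u x + h x * (u x) ^ 2) * μ x)
        - ∑' x, Fprim f x (t * max (u x) 0) * μ x := by
  unfold Jp
  rw [tsum_integrand_smul]
  congr 1
  exact tsum_congr fun x => by rw [max_smul t (u x) ht.le]

/-- Maximality along rays: if the Nehari identity holds for `u`, then `J₊(tu) ≤ J₊(u)`. -/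
lemma lemA (μ : V → ℝ) (hμ : ∀ x, 0 < μ x) (W : V → V → ℝ) (h : V → ℝ)
    {f : V → ℝ → ℝ}
    (hf1 : ∀ x, Continuous (f x) ∧ f x 0 = 0)
    (hf5 : ∀ x, StrictMonoOn (fun y : ℝ => f x y / |y|) (Set.Iio (0:ℝ)) ∧
      StrictMonoOn (fun y : ℝ => f x y / |y|) (Set.Ioi (0:ℝ)))
    (u : V → ℝ)
    (hAeq : (∑' x, (gradPair μ W u u x + h x * (u x) ^ 2) * μ x)
        = ∑' x, f x (max (u x) 0) * max (u x) 0 * μ x)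
    (hSf : Summable (fun x => f x (max (u x) 0) * max (u x) 0 * μ x))
    (hSF : ∀ s : ℝ, 0 < s → Summable (fun x => Fprim f x (s * max (u x) 0) * μ x)) :
    ∀ t : ℝ, 0 < t → Jp μ W h f (fun x => t * u x) ≤ Jp μ W h f u := by
  intro t ht
  set A := ∑' x, (gradPair μ W u u x + h x * (u x) ^ 2) * μ x with hA
  have hpt : ∀ x, (t ^ 2 - 1) / 2 * (f x (max (u x) 0) * max (u x) 0 * μ x)
      ≤ Fprim f x (t * max (u x) 0) * μ x - Fprim f x (max (u x) 0) * μ x := by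
    intro x
    have hk := key_ineq hf1 hf5 x ht (le_max_right (u x) 0)
    have h2 := mul_le_mul_of_nonneg_right hk (hμ x).le
    calc (t ^ 2 - 1) / 2 * (f x (max (u x) 0) * max (u x) 0 * μ x)
        = ((t ^ 2 - 1) / 2 * (f x (max (u x) 0) * max (u x) 0)) * μ x := by ring
      _ ≤ (Fprim f x (t * max (u x) 0) - Fprim f x (max (u x) 0)) * μ x := h2
      _ = Fprim f x (t * max (u x) 0) * μ x - Fprim f x (max (u x) 0) * μ x := by ring
  have hS1 := hSF t ht
  have hS2 : Summable (fun x => Fprim f x (max (u x) 0) * μ x) := by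
    have := hSF 1 one_pos
    simpa using this
  have hsum_le : (t ^ 2 - 1) / 2 * (∑' x, f x (max (u x) 0) * max (u x) 0 * μ x)
      ≤ (∑' x, Fprim f x (t * max (u x) 0) * μ x)
        - ∑' x, Fprim f x (max (u x) 0) * μ x := by
    rw [← tsum_mul_left, ← hS1.tsum_sub hS2]
    exact Summable.tsum_le_tsum hpt (hSf.mul_left _) (hS1.sub hS2)
  rw [← hAeq] at hsum_le
  have hJt := Jp_smul_eval μ W h f u ht
  have hJu : Jp μ W h f u
      = (1 / 2) * A - ∑' x, Fprim f x (max (u x) 0) * μ x := rfl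
  have hr : (t ^ 2 - 1) / 2 * A = (1 / 2) * (t ^ 2 * A) - (1 / 2) * A := by ring
  rw [hJt, hJu]
  linarith

end maxlemma

section prelim
variable {V : Type*}

lemma integrand_nonneg' {μ : V → ℝ} (hμ : ∀ x, 0 < μ x) {W : V → V → ℝ}
    (hW : ∀ x y, 0 ≤ W x y) {h : V → ℝ} (hh : ∀ x, 0 ≤ h x) (u : V → ℝ) (x : V) :
    0 ≤ (gradPair μ W u u x + h x * (u x) ^ 2) * μ x :=
  mul_nonneg (add_nonneg (grad_self_nonneg μ W hμ hW u x)
    (mul_nonneg (hh x) (sq_nonneg _))) (hμ x).le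

lemma prelim {μ : V → ℝ} (hμ : ∀ x, 0 < μ x) {μ0 : ℝ} (hμ0 : 0 < μ0)
    (hμl : ∀ x, μ0 ≤ μ x)
    {W : V → V → ℝ} (hW : ∀ x y, 0 ≤ W x y)
    {h : V → ℝ} {h0 : ℝ} (hh0 : 0 < h0) (hhl : ∀ x, h0 ≤ h x)
    {u : V → ℝ}
    (hmem : Summable fun x => (gradPair μ W u u x + h x * (u x) ^ 2) * μ x) :
    ∃ B : ℝ, 0 < B ∧ (∀ x, max (u x) 0 ≤ B) ∧
      (Summable fun x => (max (u x) 0) ^ 2 * μ x) ∧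
      (Summable fun x => (u x) ^ 2 * μ x) := by
  set A := ∑' x, (gradPair μ W u u x + h x * (u x) ^ 2) * μ x with hA
  have hh' : ∀ x, 0 ≤ h x := fun x => (lt_of_lt_of_le hh0 (hhl x)).le
  have hnn : ∀ x, 0 ≤ (gradPair μ W u u x + h x * (u x) ^ 2) * μ x :=
    integrand_nonneg' hμ hW hh' u
  have hA0 : 0 ≤ A := tsum_nonneg hnn
  have hterm : ∀ x, h0 * (u x ^ 2 * μ x) ≤ (gradPair μ W u u x + h x * (u x) ^ 2) * μ x := by
    intro x
    have hg := grad_self_nonneg μ W hμ hW u x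
    have h1 : h0 * u x ^ 2 ≤ h x * u x ^ 2 :=
      mul_le_mul_of_nonneg_right (hhl x) (sq_nonneg _)
    nlinarith [hμ x]
  have hsumu2 : Summable fun x => u x ^ 2 * μ x := by
    apply Summable.of_nonneg_of_le
      (fun x => mul_nonneg (sq_nonneg _) (hμ x).le)
      (f := fun x => (1 / h0) * ((gradPair μ W u u x + h x * (u x) ^ 2) * μ x))
      ?_ (hmem.mul_left _)
    intro x
    calc u x ^ 2 * μ x = (1 / h0) * (h0 * (u x ^ 2 * μ x)) := by field_simp
      _ ≤ (1 / h0) * ((gradPair μ W u u x + h x * (u x) ^ 2) * μ x) :=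
          mul_le_mul_of_nonneg_left (hterm x) (by positivity)
  have hsumw2 : Summable fun x => (max (u x) 0) ^ 2 * μ x := by
    apply Summable.of_nonneg_of_le
      (fun x => mul_nonneg (sq_nonneg _) (hμ x).le) ?_ hsumu2
    intro x
    apply mul_le_mul_of_nonneg_right ?_ (hμ x).le
    rcases le_total (u x) 0 with hx | hx
    · rw [max_eq_right hx]; simpa using sq_nonneg (u x)
    · rw [max_eq_left hx]
  refine ⟨Real.sqrt (A / (h0 * μ0)) + 1, by positivity, ?_, hsumw2, hsumu2⟩
  intro x
  have hle : (gradPair μ W u u x + h x * (u x) ^ 2) * μ x ≤ A := Summable.le_tsum hmem x fun j _ => hnn j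
  have hsq : u x ^ 2 ≤ A / (h0 * μ0) := by
    rw [le_div_iff₀ (by positivity)]
    have h2 : h0 * (u x ^ 2 * μ0) ≤ h0 * (u x ^ 2 * μ x) :=
      mul_le_mul_of_nonneg_left
        (mul_le_mul_of_nonneg_left (hμl x) (sq_nonneg _)) hh0.le
    nlinarith [hterm x]
  have habs : |u x| ≤ Real.sqrt (A / (h0 * μ0)) := by
    rw [← Real.sqrt_sq_eq_abs]
    exact Real.sqrt_le_sqrt hsq
  have : max (u x) 0 ≤ |u x| := max_le (le_abs_self _) (abs_nonneg _)
  linarith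

end prelim

section contgrow
variable {V : Type*} [Countable V]

set_option maxHeartbeats 1000000 in
/-- Continuity of `t ↦ Φ(t)` on `[0,T]`. -/
lemma Phi_contOn {w μ : V → ℝ} {μ0 : ℝ} (hμ0 : 0 < μ0) (hμl : ∀ x, μ0 ≤ μ x)
    (hμ : ∀ x, 0 < μ x)
    (hw : ∀ x, 0 ≤ w x) {B : ℝ} (hB : 0 < B) (hwB : ∀ x, w x ≤ B)
    (hsum2 : Summable fun x => w x ^ 2 * μ x)
    {f : V → ℝ → ℝ} {α : ℝ} (hα : 2 < α)
    (hf1 : ∀ x, Continuous (f x) ∧ f x 0 = 0)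
    (hf2 : ∀ M : ℝ, 0 < M → ∃ C : ℝ, ∀ x, ∀ y : ℝ, |y| ≤ M → |f x y| ≤ C)
    (hf3 : ∀ x, ∀ y : ℝ, y ≠ 0 → 0 < α * Fprim f x y ∧ α * Fprim f x y ≤ y * f x y)
    {K δ : ℝ} (hδ : 0 < δ) (hK : ∀ x, ∀ y : ℝ, 0 < y → y < δ → f x y ≤ K * y)
    {T : ℝ} (hT : 0 < T) :
    ContinuousOn (fun t : ℝ => ∑' x, f x (t * w x) * w x * μ x) (Set.Icc 0 T) := by
  obtain ⟨C₀, hC₀⟩ := hf2 (T * B) (by positivity)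
  set C := max C₀ 0 with hCdef
  have hC : ∀ x (y : ℝ), |y| ≤ T * B → |f x y| ≤ C := fun x y hy =>
    (hC₀ x y hy).trans (le_max_left _ _)
  have hCpos : 0 ≤ C := le_max_right _ _
  set K' := max K 0 with hK'def
  have hK'pos : 0 ≤ K' := le_max_right _ _
  have hK' : ∀ x, ∀ y : ℝ, 0 < y → y < δ → f x y ≤ K' * y := by
    intro x y h1 h2
    exact (hK x y h1 h2).trans (by nlinarith [le_max_left K 0])
  set S : Set V := {x : V | δ / T ≤ w x} with hSdef
  have hfin : S.Finite := finite_large hμ0 hμl hw hsum2 (by positivity)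
  have hmaj : Summable (fun x => S.indicator (fun x => C * (w x * μ x)) x
      + K' * T * (w x ^ 2 * μ x)) := by
    apply Summable.add
    · apply summable_of_ne_finset_zero (s := hfin.toFinset)
      intro x hx
      rw [Set.Finite.mem_toFinset] at hx
      exact Set.indicator_of_notMem hx _
    · exact hsum2.mul_left (K' * T)
  apply TendstoUniformlyOn.continuousOn
    (tendstoUniformlyOn_tsum hmaj ?_)
    (Filter.Eventually.of_forall ?_).frequently
  · -- pointwise bound, uniform in t ∈ [0,T]
    intro x t htmem
    obtain ⟨ht0, htT⟩ := htmem
    have hargnn : 0 ≤ t * w x := mul_nonneg ht0 (hw x)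
    have hind : 0 ≤ S.indicator (fun x => C * (w x * μ x)) x :=
      Set.indicator_nonneg (fun y _ =>
        mul_nonneg hCpos (mul_nonneg (hw y) (hμ y).le)) x
    have h3 : 0 ≤ K' * T * (w x ^ 2 * μ x) :=
      mul_nonneg (mul_nonneg hK'pos hT.le) (mul_nonneg (sq_nonneg _) (hμ x).le)
    have hfn : 0 ≤ f x (t * w x) := f_nonneg hf1 hf3 hargnn
    rw [Real.norm_eq_abs,
      abs_of_nonneg (mul_nonneg (mul_nonneg hfn (hw x)) (hμ x).le)]
    by_cases hxS : x ∈ S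
    · rw [Set.indicator_of_mem hxS]
      have harg : |t * w x| ≤ T * B := by
        rw [abs_of_nonneg hargnn]
        exact mul_le_mul htT (hwB x) (hw x) hT.le
      have h1 : f x (t * w x) ≤ C := (le_abs_self _).trans (hC x _ harg)
      have h2 : f x (t * w x) * w x * μ x ≤ C * (w x * μ x) := by
        rw [mul_assoc]
        exact mul_le_mul_of_nonneg_right h1 (mul_nonneg (hw x) (hμ x).le)
      linarith
    · rw [Set.indicator_of_notMem hxS]
      by_cases hx0 : w x = 0
      · simp [hx0, (hf1 x).2]
      · have hwx : 0 < w x := lt_of_le_of_ne (hw x) (Ne.symm hx0)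
        have hTw : T * w x < δ := by
          simp only [hSdef, Set.mem_setOf_eq, not_le] at hxS
          rw [← lt_div_iff₀' hT]
          exact hxS
        rcases ht0.eq_or_lt with h0 | h0
        · rw [← h0]
          simp only [zero_mul, (hf1 x).2]
          linarith
        · have hpos : 0 < t * w x := mul_pos h0 hwx
          have hlt : t * w x < δ :=
            lt_of_le_of_lt (mul_le_mul_of_nonneg_right htT (hw x)) hTw
          have h1 : f x (t * w x) ≤ K' * (t * w x) := hK' x _ hpos hlt
          have h2 : f x (t * w x) * w x * μ x ≤ K' * (t * w x) * w x * μ x :=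
            mul_le_mul_of_nonneg_right
              (mul_le_mul_of_nonneg_right h1 (hw x)) (hμ x).le
          have h4 : K' * (t * w x) * w x * μ x ≤ K' * T * (w x ^ 2 * μ x) := by
            have : K' * (t * w x) * w x * μ x = K' * t * (w x ^ 2 * μ x) := by ring
            rw [this]
            apply mul_le_mul_of_nonneg_right
              (mul_le_mul_of_nonneg_left htT hK'pos)
              (mul_nonneg (sq_nonneg _) (hμ x).le)
          linarith
  · -- partial sums are continuous
    intro s
    apply Continuous.continuousOn
    apply continuous_finset_sum
    intro x _
    exact (((hf1 x).1.comp (continuous_id.mul continuous_const)).mul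
      continuous_const).mul continuous_const

omit [Countable V] in
/-- Ratio step: `f(Kw)/(Kw) ≥ q f(w)/w`. -/
lemma ratio_step {f : V → ℝ → ℝ} {α : ℝ} (hα : 2 < α)
    (hf1 : ∀ x, Continuous (f x) ∧ f x 0 = 0)
    (hf3 : ∀ x, ∀ y : ℝ, y ≠ 0 → 0 < α * Fprim f x y ∧ α * Fprim f x y ≤ y * f x y)
    (hf5 : ∀ x, StrictMonoOn (fun y : ℝ => f x y / |y|) (Set.Iio (0:ℝ)) ∧
      StrictMonoOn (fun y : ℝ => f x y / |y|) (Set.Ioi (0:ℝ)))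
    (x : V) {w Kc : ℝ} (hw : 0 < w)
    (hKc : Kc = Real.sqrt (2 * α / (α - 2))) :
    (α + 2) / 4 * (f x w / w) ≤ f x (Kc * w) / (Kc * w) := by
  have hα2 : (0:ℝ) < α - 2 := by linarith
  have hK2 : Kc ^ 2 = 2 * α / (α - 2) := by
    rw [hKc]; exact Real.sq_sqrt (by positivity)
  have hKpos : 0 < Kc := by
    rw [hKc]; exact Real.sqrt_pos.mpr (by positivity)
  have hK2' : Kc ^ 2 * (α - 2) = 2 * α := by
    rw [hK2]; field_simp
  have hK1 : 1 < Kc := by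
    by_contra hc
    push_neg at hc
    have h1 : Kc ^ 2 ≤ 1 := by nlinarith
    nlinarith
  have hkey := key_ineq hf1 hf5 x hKpos hw.le
  have hFw : 0 < Fprim f x w := Fprim_pos hα hf3 hw
  have hKw : 0 < Kc * w := mul_pos hKpos hw
  have h3 := (hf3 x (Kc * w) (ne_of_gt hKw)).2
  have hfw : 0 < f x w := f_pos hf3 hw
  have hid : α * (Kc ^ 2 - 1) = 2 * Kc ^ 2 * ((α + 2) / 4) := by
    rw [hK2]; field_simp; ring
  -- chain: α (Kc²−1)/2 f(w) w ≤ α F(Kw) ≤ Kw f(Kw)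
  have hαpos : (0:ℝ) < α := by linarith
  have c1 : α * ((Kc ^ 2 - 1) / 2 * (f x w * w)) ≤ Kc * w * f x (Kc * w) := by
    have e1 : α * ((Kc ^ 2 - 1) / 2 * (f x w * w)) ≤ α * Fprim f x (Kc * w) := by
      apply mul_le_mul_of_nonneg_left ?_ hαpos.le
      linarith
    linarith
  have hrw : (α + 2) / 4 * (f x w / w) = ((α + 2) / 4 * f x w) / w := by ring
  rw [hrw, div_le_div_iff₀ hw hKw]
  -- goal: (α+2)/4 * f x w * (Kc * w) ≤ f x (Kc*w) * w
  apply le_of_mul_le_mul_left ?_ hKpos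
  calc Kc * ((α + 2) / 4 * f x w * (Kc * w))
      = α * ((Kc ^ 2 - 1) / 2 * (f x w * w)) := by
        linear_combination (-(f x w * w) / 2) * hid
    _ ≤ Kc * (f x (Kc * w) * w) := by linarith [c1]

end contgrow

section grow2
variable {V : Type*}

lemma ratio_grow {f : V → ℝ → ℝ} {α : ℝ} (hα : 2 < α)
    (hf1 : ∀ x, Continuous (f x) ∧ f x 0 = 0)
    (hf3 : ∀ x, ∀ y : ℝ, y ≠ 0 → 0 < α * Fprim f x y ∧ α * Fprim f x y ≤ y * f x y)
    (hf5 : ∀ x, StrictMonoOn (fun y : ℝ => f x y / |y|) (Set.Iio (0:ℝ)) ∧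
      StrictMonoOn (fun y : ℝ => f x y / |y|) (Set.Ioi (0:ℝ)))
    (x : V) {c Kc : ℝ} (hc : 0 < c)
    (hKc : Kc = Real.sqrt (2 * α / (α - 2))) :
    ∀ n : ℕ, ((α + 2) / 4) ^ n * (f x c / c) ≤ f x (Kc ^ n * c) / (Kc ^ n * c) := by
  have hα2 : (0:ℝ) < α - 2 := by linarith
  have hKpos : 0 < Kc := by
    rw [hKc]; exact Real.sqrt_pos.mpr (by positivity)
  intro n
  induction n with
  | zero => simp
  | succ n ih =>
    have hw : 0 < Kc ^ n * c := by positivity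
    have hstep := ratio_step hα hf1 hf3 hf5 x hw hKc
    have hq : (0:ℝ) < (α + 2) / 4 := by linarith
    calc ((α + 2) / 4) ^ (n + 1) * (f x c / c)
        = (α + 2) / 4 * (((α + 2) / 4) ^ n * (f x c / c)) := by ring
      _ ≤ (α + 2) / 4 * (f x (Kc ^ n * c) / (Kc ^ n * c)) :=
          mul_le_mul_of_nonneg_left ih hq.le
      _ ≤ f x (Kc * (Kc ^ n * c)) / (Kc * (Kc ^ n * c)) := hstep
      _ = f x (Kc ^ (n + 1) * c) / (Kc ^ (n + 1) * c) := by
          rw [show Kc * (Kc ^ n * c) = Kc ^ (n + 1) * c by ring]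

end grow2

set_option maxHeartbeats 2000000 in
/-- Under (F1)–(F5): if `u ∈ H_s` with `u⁺ ≢ 0` then there is a unique `t₀ > 0` with
`t₀ u ∈ N_+`, and `J_+(t₀u) = max_{t>0} J_+(tu)`; moreover if `u ∈ N_+` then
`J_+(u) = max_{t>0} J_+(tu)`. -/
theorem nehari_unique_projection
    {V : Type*} [Countable V] [Infinite V]
    (μ : V → ℝ) (hμ : ∀ x, 0 < μ x) (hμ0 : 0 < ⨅ x, μ x)
    (W : V → V → ℝ)
    (hWsymm : ∀ x y, W x y = W y x)
    (hWdiag : ∀ x, W x x = 0)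
    (hWnonneg : ∀ x y, 0 ≤ W x y)
    (hWsum : ∀ x, Summable fun y => W x y)
    (h : V → ℝ) (hh0 : 0 < ⨅ x, h x)
    (f : V → ℝ → ℝ)
    (hf1 : ∀ x, Continuous (f x) ∧ f x 0 = 0)
    (hf2 : ∀ M : ℝ, 0 < M → ∃ C : ℝ, ∀ x, ∀ y : ℝ, |y| ≤ M → |f x y| ≤ C)
    (α : ℝ) (hα : 2 < α)
    (hf3 : ∀ x, ∀ y : ℝ, y ≠ 0 →
      0 < α * Fprim f x y ∧ α * Fprim f x y ≤ y * f x y)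
    (hf4 : ∃ ε > (0:ℝ), ∃ δ > (0:ℝ), ∀ x, ∀ y : ℝ, y ≠ 0 → |y| < δ →
      f x y / y ≤ lam1 μ W h - ε)
    (hf5 : ∀ x, StrictMonoOn (fun y : ℝ => f x y / |y|) (Set.Iio (0:ℝ)) ∧
      StrictMonoOn (fun y : ℝ => f x y / |y|) (Set.Ioi (0:ℝ)))
    (u : V → ℝ) :
    (memHs μ W h u → (fun x => max (u x) 0) ≠ 0 →
      ∃ t₀ : ℝ, 0 < t₀ ∧ NehP μ W h f (fun x => t₀ * u x) ∧
        (∀ t : ℝ, 0 < t → NehP μ W h f (fun x => t * u x) → t = t₀) ∧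
        (∀ t : ℝ, 0 < t →
          Jp μ W h f (fun x => t * u x) ≤ Jp μ W h f (fun x => t₀ * u x))) ∧
    (NehP μ W h f u →
      ∀ t : ℝ, 0 < t → Jp μ W h f (fun x => t * u x) ≤ Jp μ W h f u) := by
  obtain ⟨ε, hε, δ, hδ, hf4'⟩ := hf4
  have hKin : ∀ x, ∀ y : ℝ, 0 < y → y < δ → f x y ≤ (lam1 μ W h - ε) * y := by
    intro x y hy hyδ
    have h1 := hf4' x y (ne_of_gt hy) (by rw [abs_of_pos hy]; exact hyδ)
    rw [div_le_iff₀ hy] at h1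
    exact h1
  have hμl : ∀ x, (⨅ y, μ y) ≤ μ x := real_iInf_le hμ0
  have hhl : ∀ x, (⨅ y, h y) ≤ h x := real_iInf_le hh0
  have hh' : ∀ x, 0 ≤ h x := fun x => le_trans hh0.le (hhl x)
  have hlam0 : 0 ≤ lam1 μ W h := by
    apply Real.sInf_nonneg
    rintro r ⟨v, _, _, rfl⟩
    exact div_nonneg (sq_nonneg _)
      (tsum_nonneg fun x => mul_nonneg (sq_nonneg _) (hμ x).le)
  constructor
  · -- existence, uniqueness, maximality
    intro hmem hne
    have hAsum := hmem.1
    set A := ∑' x, (gradPair μ W u u x + h x * u x ^ 2) * μ x with hA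
    have hwnn : ∀ x, (0:ℝ) ≤ max (u x) 0 := fun x => le_max_right _ _
    obtain ⟨x₀, hx₀⟩ : ∃ x, max (u x) 0 ≠ 0 := by
      by_contra hc; push_neg at hc; exact hne (funext hc)
    have hwx₀ : 0 < max (u x₀) 0 := lt_of_le_of_ne (hwnn x₀) (Ne.symm hx₀)
    have hux₀ : 0 < u x₀ := by
      rcases le_or_gt (u x₀) 0 with hc | hc
      · rw [max_eq_right hc] at hwx₀; exact absurd hwx₀ (lt_irrefl 0)
      · exact hc
    have hune : u ≠ 0 := by
      intro hc
      have := congrFun hc x₀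
      simp only [Pi.zero_apply] at this
      rw [this] at hux₀; exact absurd hux₀ (lt_irrefl 0)
    obtain ⟨B, hB, hwB, hsumw2, hsumu2⟩ := prelim hμ hμ0 hμl hWnonneg hh0 hhl hAsum
    have hst : ∀ t : ℝ, 0 < t →
        Summable (fun x => f x (t * max (u x) 0) * max (u x) 0 * μ x) ∧
        Summable (fun x => Fprim f x (t * max (u x) 0) * μ x) :=
      fun t ht => summable_terms hμ0 hμl hμ hwnn hB hwB hsumw2 hα hf1 hf2 hf3 hδ hKin ht
    have hftermnn : ∀ (t : ℝ), 0 < t → ∀ x,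
        0 ≤ f x (t * max (u x) 0) * max (u x) 0 * μ x := by
      intro t ht x
      exact mul_nonneg (mul_nonneg
        (f_nonneg hf1 hf3 (mul_nonneg ht.le (hwnn x))) (hwnn x)) (hμ x).le
    set Φ := fun t : ℝ => ∑' x, f x (t * max (u x) 0) * max (u x) 0 * μ x with hΦ
    have hAnn : ∀ x, 0 ≤ (gradPair μ W u u x + h x * u x ^ 2) * μ x :=
      integrand_nonneg' hμ hWnonneg hh' u
    have hA0 : 0 ≤ A := tsum_nonneg hAnn
    have hDge : (∑' x, (max (u x) 0) ^ 2 * μ x) ≤ ∑' x, u x ^ 2 * μ x := by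
      apply Summable.tsum_le_tsum ?_ hsumw2 hsumu2
      intro x
      apply mul_le_mul_of_nonneg_right ?_ (hμ x).le
      rcases le_total (u x) 0 with hx | hx
      · rw [max_eq_right hx]; simpa using sq_nonneg (u x)
      · rw [max_eq_left hx]
    have hwsum_pos : 0 < ∑' x, (max (u x) 0) ^ 2 * μ x := by
      have h1 : 0 < (max (u x₀) 0) ^ 2 * μ x₀ := mul_pos (pow_pos hwx₀ 2) (hμ x₀)
      exact lt_of_lt_of_le h1 (Summable.le_tsum hsumw2 x₀ fun j _ =>
        mul_nonneg (sq_nonneg _) (hμ j).le)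
    have hDpos : 0 < ∑' x, u x ^ 2 * μ x := lt_of_lt_of_le hwsum_pos hDge
    have hlamD : lam1 μ W h * (∑' x, u x ^ 2 * μ x) ≤ A := by
      have h1 : lam1 μ W h ≤ A / (∑' x, u x ^ 2 * μ x) := by
        apply csInf_le
        · exact ⟨0, fun r hr => by
            obtain ⟨v, _, _, rfl⟩ := hr
            exact div_nonneg (sq_nonneg _)
              (tsum_nonneg fun x => mul_nonneg (sq_nonneg _) (hμ x).le)⟩
        · exact ⟨u, hmem, hune, by rw [normHs, Real.sq_sqrt hA0]⟩
      exact (le_div_iff₀ hDpos).mp h1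
    -- the small parameter
    set ts := δ / (2 * B) with hts
    have htspos : 0 < ts := by rw [hts]; positivity
    have hχts : Φ ts < ts * A := by
      have hpt : ∀ x, f x (ts * max (u x) 0) * max (u x) 0 * μ x
          ≤ ((lam1 μ W h - ε) * ts) * ((max (u x) 0) ^ 2 * μ x) := by
        intro x
        rcases (hwnn x).eq_or_lt with h0 | h0
        · rw [← h0]; simp [(hf1 x).2]
        · have harg : ts * max (u x) 0 < δ := by
            have he : ts * (2 * B) = δ := by
              rw [hts]
              exact div_mul_cancel₀ δ (ne_of_gt (by linarith : (0:ℝ) < 2 * B))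
            nlinarith [mul_le_mul_of_nonneg_left (hwB x) htspos.le]
          have h1 := hKin x (ts * max (u x) 0) (mul_pos htspos h0) harg
          calc f x (ts * max (u x) 0) * max (u x) 0 * μ x
              ≤ ((lam1 μ W h - ε) * (ts * max (u x) 0)) * max (u x) 0 * μ x :=
                mul_le_mul_of_nonneg_right
                  (mul_le_mul_of_nonneg_right h1 (hwnn x)) (hμ x).le
            _ = ((lam1 μ W h - ε) * ts) * ((max (u x) 0) ^ 2 * μ x) := by ring
      have h1 : Φ ts ≤ ((lam1 μ W h - ε) * ts) * ∑' x, (max (u x) 0) ^ 2 * μ x := by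
        calc Φ ts ≤ ∑' x, ((lam1 μ W h - ε) * ts) * ((max (u x) 0) ^ 2 * μ x) :=
              Summable.tsum_le_tsum hpt (hst ts htspos).1 (hsumw2.mul_left _)
          _ = _ := tsum_mul_left
      have p1 : 0 < ε * ts * ∑' x, (max (u x) 0) ^ 2 * μ x :=
        mul_pos (mul_pos hε htspos) hwsum_pos
      have p2 : 0 ≤ lam1 μ W h * ts *
          ((∑' x, u x ^ 2 * μ x) - ∑' x, (max (u x) 0) ^ 2 * μ x) :=
        mul_nonneg (mul_nonneg hlam0 htspos.le) (sub_nonneg.mpr hDge)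
      have p3 : 0 ≤ ts * (A - lam1 μ W h * ∑' x, u x ^ 2 * μ x) :=
        mul_nonneg htspos.le (sub_nonneg.mpr hlamD)
      nlinarith [h1]
    -- growth: find T with Φ T > T * A
    have hq1 : (1:ℝ) < (α + 2) / 4 := by linarith
    have hα2 : (0:ℝ) < α - 2 := by linarith
    have hKc1 : 1 < Real.sqrt (2 * α / (α - 2)) := by
      have hK2 : Real.sqrt (2 * α / (α - 2)) ^ 2 = 2 * α / (α - 2) :=
        Real.sq_sqrt (by positivity)
      have hKpos : 0 < Real.sqrt (2 * α / (α - 2)) :=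
        Real.sqrt_pos.mpr (by positivity)
      have hK2' : Real.sqrt (2 * α / (α - 2)) ^ 2 * (α - 2) = 2 * α := by
        rw [hK2]; field_simp
      by_contra hc
      push_neg at hc
      have hsq : Real.sqrt (2 * α / (α - 2)) ^ 2 ≤ 1 := by nlinarith
      nlinarith
    have hm0 : 0 < f x₀ (max (u x₀) 0) / max (u x₀) 0 :=
      div_pos (f_pos hf3 hwx₀) hwx₀
    have hgrow := ratio_grow hα hf1 hf3 hf5 x₀ hwx₀ rfl
    obtain ⟨n, hn1, hn2⟩ : ∃ n : ℕ,
        A / ((f x₀ (max (u x₀) 0) / max (u x₀) 0) * (max (u x₀) 0) ^ 2 * μ x₀)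
          < ((α + 2) / 4) ^ n ∧ ts + 1 ≤ Real.sqrt (2 * α / (α - 2)) ^ n := by
      have t1 := tendsto_pow_atTop_atTop_of_one_lt hq1
      have t2 := tendsto_pow_atTop_atTop_of_one_lt hKc1
      exact ((t1.eventually_gt_atTop _).and (t2.eventually_ge_atTop _)).exists
    set T := Real.sqrt (2 * α / (α - 2)) ^ n with hT
    have hTpos : 0 < T := pow_pos (lt_trans one_pos hKc1) n
    have htsT : ts < T := by rw [hT]; linarith
    have hχT : T * A < Φ T := by
      have hterm : f x₀ (T * max (u x₀) 0) * max (u x₀) 0 * μ x₀ ≤ Φ T :=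
        Summable.le_tsum (hst T hTpos).1 x₀ fun j _ => hftermnn T hTpos j
      have hr := hgrow n
      have hTc : 0 < T * max (u x₀) 0 := mul_pos hTpos hwx₀
      have h2 : ((α + 2) / 4) ^ n * (f x₀ (max (u x₀) 0) / max (u x₀) 0)
          * (T * max (u x₀) 0) ≤ f x₀ (T * max (u x₀) 0) := by
        have := (le_div_iff₀ hTc).mp hr
        linarith
      have h3 : A < ((α + 2) / 4) ^ n
          * ((f x₀ (max (u x₀) 0) / max (u x₀) 0) * (max (u x₀) 0) ^ 2 * μ x₀) := by
        rw [div_lt_iff₀ (mul_pos (mul_pos hm0 (pow_pos hwx₀ 2)) (hμ x₀))] at hn1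
        linarith
      have h4 : ((α + 2) / 4) ^ n * (f x₀ (max (u x₀) 0) / max (u x₀) 0)
          * (T * max (u x₀) 0) * max (u x₀) 0 * μ x₀
          ≤ f x₀ (T * max (u x₀) 0) * max (u x₀) 0 * μ x₀ :=
        mul_le_mul_of_nonneg_right
          (mul_le_mul_of_nonneg_right h2 hwx₀.le) (hμ x₀).le
      have h5 : T * A < T * (((α + 2) / 4) ^ n
          * ((f x₀ (max (u x₀) 0) / max (u x₀) 0) * (max (u x₀) 0) ^ 2 * μ x₀)) :=
        mul_lt_mul_of_pos_left h3 hTpos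
      have h6 : T * (((α + 2) / 4) ^ n
          * ((f x₀ (max (u x₀) 0) / max (u x₀) 0) * (max (u x₀) 0) ^ 2 * μ x₀))
          = ((α + 2) / 4) ^ n * (f x₀ (max (u x₀) 0) / max (u x₀) 0)
            * (T * max (u x₀) 0) * max (u x₀) 0 * μ x₀ := by ring
      linarith
    -- IVT
    have hΦcont : ContinuousOn Φ (Set.Icc 0 T) :=
      Phi_contOn hμ0 hμl hμ hwnn hB hwB hsumw2 hα hf1 hf2 hf3 hδ hKin hTpos
    have hχcont : ContinuousOn (fun t => Φ t - t * A) (Set.Icc ts T) :=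
      (hΦcont.mono (Set.Icc_subset_Icc htspos.le le_rfl)).sub
        ((continuous_id.mul continuous_const).continuousOn)
    have h0mem : (0:ℝ) ∈ Set.Icc (Φ ts - ts * A) (Φ T - T * A) :=
      ⟨by linarith, by linarith⟩
    obtain ⟨t₀, ht₀mem, ht₀eq⟩ := intermediate_value_Icc htsT.le hχcont h0mem
    have ht₀pos : 0 < t₀ := lt_of_lt_of_le htspos ht₀mem.1
    have hΦt₀ : Φ t₀ = t₀ * A := by
      have : Φ t₀ - t₀ * A = 0 := ht₀eq
      linarith
    -- the Nehari scaling identity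
    have hNmax : ∀ s : ℝ, 0 < s →
        (∑' x, f x (max (s * u x) 0) * max (s * u x) 0 * μ x) = s * Φ s := by
      intro s hs
      calc ∑' x, f x (max (s * u x) 0) * max (s * u x) 0 * μ x
          = ∑' x, s * (f x (s * max (u x) 0) * max (u x) 0 * μ x) :=
            tsum_congr fun x => by rw [max_smul s (u x) hs.le]; ring
        _ = s * Φ s := tsum_mul_left
    have hNeh : NehP μ W h f (fun x => t₀ * u x) := by
      refine ⟨memHs_smul t₀ hmem, ?_, ?_⟩
      · intro hc
        have h1 : t₀ * u x₀ = 0 := by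
          have := congrFun hc x₀
          simpa using this
        nlinarith [mul_pos ht₀pos hux₀]
      · rw [tsum_integrand_smul, hNmax t₀ ht₀pos, hΦt₀]; ring
    -- strict comparison of Φ s / s
    have hmono : ∀ s s' : ℝ, 0 < s → s < s' → Φ s = s * A → Φ s' = s' * A → False := by
      intro s s' hs hss' he1 he2
      have hs' : 0 < s' := lt_trans hs hss'
      have hlt : ∑' x, (1 / s) * (f x (s * max (u x) 0) * max (u x) 0 * μ x)
          < ∑' x, (1 / s') * (f x (s' * max (u x) 0) * max (u x) 0 * μ x) := by
        have hptle : ∀ x, (1 / s) * (f x (s * max (u x) 0) * max (u x) 0 * μ x)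
            ≤ (1 / s') * (f x (s' * max (u x) 0) * max (u x) 0 * μ x) := by
          intro x
          rcases (hwnn x).eq_or_lt with h0 | h0
          · rw [← h0]; simp [(hf1 x).2]
          · have hm := f_div_mono hf5 x (mul_pos hs h0)
              (mul_le_mul_of_nonneg_right hss'.le (hwnn x))
            rw [div_le_div_iff₀ (mul_pos hs h0) (mul_pos hs' h0)] at hm
            have hμx := (hμ x).le
            rw [div_mul_eq_mul_div, div_mul_eq_mul_div, div_le_div_iff₀ hs hs']
            nlinarith [mul_le_mul_of_nonneg_right hm (mul_nonneg (hwnn x) hμx)]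
        have hptlt : (1 / s) * (f x₀ (s * max (u x₀) 0) * max (u x₀) 0 * μ x₀)
            < (1 / s') * (f x₀ (s' * max (u x₀) 0) * max (u x₀) 0 * μ x₀) := by
          have hm := f_div_strict hf5 x₀ (mul_pos hs hwx₀)
            (mul_lt_mul_of_pos_right hss' hwx₀)
          rw [div_lt_div_iff₀ (mul_pos hs hwx₀) (mul_pos hs' hwx₀)] at hm
          have hμx := hμ x₀
          rw [div_mul_eq_mul_div, div_mul_eq_mul_div, div_lt_div_iff₀ hs hs']
          nlinarith [mul_lt_mul_of_pos_right
            (mul_lt_mul_of_pos_right hm hwx₀) hμx]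
        exact Summable.tsum_lt_tsum hptle hptlt
          (((hst s hs).1).mul_left _) (((hst s' hs').1).mul_left _)
      rw [tsum_mul_left, tsum_mul_left] at hlt
      change (1 / s) * Φ s < (1 / s') * Φ s' at hlt
      rw [he1, he2] at hlt
      have : A < A := by
        have e1 : (1 / s) * (s * A) = A := by field_simp
        have e2 : (1 / s') * (s' * A) = A := by field_simp
        rw [e1, e2] at hlt
        exact hlt
      exact absurd this (lt_irrefl A)
    refine ⟨t₀, ht₀pos, hNeh, ?_, ?_⟩
    · -- uniqueness
      intro t ht hNt
      have heqt : Φ t = t * A := by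
        have he := hNt.2.2
        rw [tsum_integrand_smul, hNmax t ht] at he
        have ht' : t ≠ 0 := ne_of_gt ht
        have : t * (t * A) = t * Φ t := by linear_combination he
        have := mul_left_cancel₀ ht' this
        linarith
      rcases lt_trichotomy t t₀ with hlt | heq | hgt
      · exact (hmono t t₀ ht hlt heqt hΦt₀).elim
      · exact heq
      · exact (hmono t₀ t ht₀pos hgt hΦt₀ heqt).elim
    · -- maximality
      intro t ht
      have hSf : Summable (fun x =>
          f x (max (t₀ * u x) 0) * max (t₀ * u x) 0 * μ x) := by
        apply Summable.congr (((hst t₀ ht₀pos).1).mul_left t₀)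
        intro x
        rw [max_smul t₀ (u x) ht₀pos.le]
        ring
      have hSF : ∀ s : ℝ, 0 < s → Summable (fun x =>
          Fprim f x (s * max (t₀ * u x) 0) * μ x) := by
        intro s hs
        apply Summable.congr ((hst (s * t₀) (mul_pos hs ht₀pos)).2)
        intro x
        rw [max_smul t₀ (u x) ht₀pos.le, ← mul_assoc]
      have hJle := lemA μ hμ W h hf1 hf5 (fun x => t₀ * u x) hNeh.2.2 hSf hSF
        (t / t₀) (div_pos ht ht₀pos)
      have hfun : (fun x => (t / t₀) * (t₀ * u x)) = (fun x => t * u x) := by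
        funext x
        rw [← mul_assoc, div_mul_cancel₀ t (ne_of_gt ht₀pos)]
      rw [hfun] at hJle
      exact hJle
  · -- second part
    intro hN t ht
    obtain ⟨B, hB, hwB, hsumw2, hsumu2⟩ := prelim hμ hμ0 hμl hWnonneg hh0 hhl hN.1.1
    have hwnn : ∀ x, (0:ℝ) ≤ max (u x) 0 := fun x => le_max_right _ _
    have hst : ∀ s : ℝ, 0 < s →
        Summable (fun x => f x (s * max (u x) 0) * max (u x) 0 * μ x) ∧
        Summable (fun x => Fprim f x (s * max (u x) 0) * μ x) :=
      fun s hs => summable_terms hμ0 hμl hμ hwnn hB hwB hsumw2 hα hf1 hf2 hf3 hδ hKin hs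
    apply lemA μ hμ W h hf1 hf5 u hN.2.2 ?_ ?_ t ht
    · apply Summable.congr ((hst 1 one_pos).1)
      intro x
      rw [one_mul]
    · intro s hs
      exact (hst s hs).2
end
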